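/- arXiv:1011.0683 — 6 statements merged into one kernel-verified Lean document; each statement's English description precedes it below -/
import Mathlib

section
/- Let X be a metric space with the finite doubling property and let 0 < r < 1/3. Then there exists, for each k ∈ ℤ, an index set N_k ⊂ ℕ and Borel sets Q_{k,i} ⊂ X (i ∈ N_k) with points x_{k,i} ∈ X such that: (i) X = ⋃_{i ∈ N_k} Q_{k,i} for every k; (ii) for k ≥ m, each Q_{k,i} is either contained in or disjoint from each Q_{m,j}; (iii) U(x_{k,i}, c r^k) ⊂ Q_{k,i} ⊂ B(x_{k,i}, C r^k) where c = 1/2 − r/(1−r) and C = 1/(1−r); (iv) there is a point x_0 such that for every k there is i ∈ N_k with U(x_0, c r^k) ⊂ Q_{k,i}; (v) {x_{k,i} : i ∈ N_k} ⊂ {x_{k+1,i} : i ∈ N_{k+1}} for all k. -/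
/-!
Zorn's lemma gives an increasing family of sets `M k`, `r ^ k`-separated at level `k` and maximal
among such families; by the doubling property each level is locally finite. Every point of level
`k + 1` gets a parent of level `k` within distance `r ^ k`, namely the point of level `k` within
`r ^ k / 2` whenever there is one. The closures of the sets of descendants are closed cubes of
radius at most `r ^ k / (1 - r)` about their centres; they cover `X`, and each is the finite union
of the closed cubes of its children. Choosing for every `z`, from level `0` upwards, the first
closed cube containing `z` among the children of the previous one, and taking parents below
level `0`, yields a coherent branch of centres whose level sets are Borel cubes. A point within
`(1 / 2 - r / (1 - r)) * r ^ k` of a centre `x` lies in no other closed cube of level `k`, since a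
descendant of another centre near it would be the descendant of a child with parent `x`.
-/

open Metric Set Filter Topology

theorem measurable_sInf_setOf_nat {α : Type*} [MeasurableSpace α] {p : α → ℕ → Prop}
    (hp : ∀ a, ∃ j, p a j) (hm : ∀ j, MeasurableSet {a | p a j}) :
    Measurable fun a => sInf {j | p a j} := by
  classical
  have : (fun a => sInf {j | p a j}) = fun a => Nat.find (hp a) :=
    funext fun a => Nat.sInf_def (hp a)
  rw [this]
  exact measurable_find hp hm

theorem exists_first_index {α : Type*} {e : ℕ → α} {x : α} (hx : x ∈ range e) :
    ∃ i, (∀ j < i, e j ≠ e i) ∧ e i = x := by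
  classical
  exact ⟨Nat.find hx, fun j hj hje => Nat.find_min hx hj (hje.trans (Nat.find_spec hx)),
    Nat.find_spec hx⟩

def FiniteDoubling (X : Type*) [PseudoMetricSpace X] : Prop :=
  ∀ (x : X) (ρ : ℝ), ∃ s : Finset X, closedBall x (2 * ρ) ⊆ ⋃ y ∈ s, closedBall y ρ

namespace FiniteDoubling

variable {X : Type*} [PseudoMetricSpace X]

theorem exists_finset_closedBall_subset (hX : FiniteDoubling X) (x : X) (R : ℝ) {ε : ℝ}
    (hε : 0 < ε) : ∃ s : Finset X, closedBall x R ⊆ ⋃ y ∈ s, closedBall y ε := by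
  have pow_two_mul : ∀ (m : ℕ) (x : X),
      ∃ s : Finset X, closedBall x (2 ^ m * ε) ⊆ ⋃ y ∈ s, closedBall y ε := by
    intro m
    induction m with
    | zero => exact fun x => ⟨{x}, by simp⟩
    | succ m ih =>
      intro x
      classical
      obtain ⟨s, hs⟩ := hX x (2 ^ m * ε)
      choose t ht using ih
      refine ⟨s.biUnion t, fun p hp => ?_⟩
      rw [pow_succ', mul_assoc] at hp
      obtain ⟨y, hy, hpy⟩ := mem_iUnion₂.1 (hs hp)
      obtain ⟨z, hz, hpz⟩ := mem_iUnion₂.1 (ht y hpy)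
      exact mem_iUnion₂.2 ⟨z, Finset.mem_biUnion.2 ⟨y, hy, hz⟩, hpz⟩
  obtain ⟨m, hm⟩ := pow_unbounded_of_one_lt (R / ε) one_lt_two
  obtain ⟨s, hs⟩ := pow_two_mul m x
  exact ⟨s, (closedBall_subset_closedBall ((div_lt_iff₀ hε).1 hm).le).trans hs⟩

theorem finite_of_subset_closedBall (hX : FiniteDoubling X) {s : Set X} {x : X} {R δ : ℝ}
    (hδ : 0 < δ) (hs : s ⊆ closedBall x R) (hsep : s.Pairwise fun a b => δ ≤ dist a b) :
    s.Finite := by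
  obtain ⟨t, ht⟩ := hX.exists_finset_closedBall_subset x R (ε := δ / 3) (by positivity)
  have hst : s ⊆ ⋃ y ∈ t, s ∩ closedBall y (δ / 3) := fun p hp => by
    obtain ⟨y, hy, hpy⟩ := mem_iUnion₂.1 (ht (hs hp))
    exact mem_iUnion₂.2 ⟨y, hy, hp, hpy⟩
  refine (t.finite_toSet.biUnion fun y _ => ?_).subset hst
  refine Subsingleton.finite fun a ha b hb => by_contra fun hab => ?_
  have hδab := hsep ha.1 hb.1 hab
  have := dist_triangle_right a b y
  have := mem_closedBall.1 ha.2
  have := mem_closedBall.1 hb.2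
  linarith

end FiniteDoubling

section Packing

variable {X : Type*} [PseudoMetricSpace X]

def IsNestedPacking (r : ℝ) (M : ℤ → Set X) : Prop :=
  Monotone M ∧ ∀ k, (M k).Pairwise fun x y => r ^ k ≤ dist x y

theorem exists_maximal_isNestedPacking (r : ℝ) (x₀ : X) :
    ∃ M : ℤ → Set X, (∀ k, x₀ ∈ M k) ∧ Maximal (IsNestedPacking r) M := by
  have chain_bound : ∀ c ⊆ {M : ℤ → Set X | IsNestedPacking r M}, IsChain (· ≤ ·) c → ∀ M₀ ∈ c,
      ∃ ub ∈ {M : ℤ → Set X | IsNestedPacking r M}, ∀ M ∈ c, M ≤ ub := by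
    intro c hc hchain _ _
    refine ⟨fun k => ⋃ M ∈ c, M k, ⟨fun i j hij => ?_, fun k => ?_⟩,
      fun M hM k x hx => mem_iUnion₂.2 ⟨M, hM, hx⟩⟩
    · exact biUnion_mono subset_rfl fun M hM => (hc hM).1 hij
    · intro x hx y hy hxy
      obtain ⟨A, hA, hxA⟩ := mem_iUnion₂.1 hx
      obtain ⟨B, hB, hyB⟩ := mem_iUnion₂.1 hy
      rcases hchain.total hA hB with hAB | hBA
      · exact (hc hB).2 k (hAB k hxA) hyB hxy
      · exact (hc hA).2 k hxA (hBA k hyB) hxy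
  have hsingleton : IsNestedPacking r (fun _ => ({x₀} : Set X)) :=
    ⟨fun _ _ _ => subset_rfl, fun _ => pairwise_singleton _ _⟩
  obtain ⟨M, hx₀, hM⟩ := zorn_le_nonempty₀ _ chain_bound _ hsingleton
  exact ⟨M, fun k => hx₀ k rfl, hM⟩

theorem Maximal.exists_dist_lt_of_notMem {r : ℝ} {M : ℤ → Set X}
    (hM : Maximal (IsNestedPacking r) M) {k : ℤ} {u : X} (hu : u ∉ M k) :
    ∃ m, k ≤ m ∧ ∃ v ∈ M m, v ≠ u ∧ dist u v < r ^ m := by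
  by_contra! hfar
  let M' : ℤ → Set X := fun j => M j ∪ {x | k ≤ j ∧ x = u}
  have hM' : IsNestedPacking r M' := by
    refine ⟨fun i j hij => union_subset_union (hM.1.1 hij) fun x hx => ⟨hx.1.trans hij, hx.2⟩,
      fun j => ?_⟩
    rintro x (hx | ⟨hkj, rfl⟩) y (hy | ⟨hkj, rfl⟩) hxy
    · exact hM.1.2 j hx hy hxy
    · exact dist_comm x y ▸ hfar j hkj x hx hxy
    · exact hfar j hkj y hy hxy.symm
    · exact absurd rfl hxy
  exact hu (hM.2 hM' (fun j => subset_union_left) k (Or.inr ⟨le_rfl, rfl⟩))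

end Packing

structure NestedNets (X : Type*) [PseudoMetricSpace X] (r : ℝ) where
  M : ℤ → Set X
  base : X
  r_pos : 0 < r
  r_lt_one : r < 1
  mono : Monotone M
  base_mem (k : ℤ) : base ∈ M k
  pairwise_le_dist (k : ℤ) : (M k).Pairwise fun x y => r ^ k ≤ dist x y
  exists_dist_lt_of_mem_succ (k : ℤ) : ∀ u ∈ M (k + 1), ∃ v ∈ M k, dist u v < r ^ k
  exists_dist_lt (y : X) (k : ℤ) : ∃ n, k ≤ n ∧ ∃ v ∈ M n, dist y v < r ^ n
  finite_inter_closedBall (k : ℤ) (x : X) (R : ℝ) : (M k ∩ closedBall x R).Finite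

theorem FiniteDoubling.nonempty_nestedNets {X : Type*} [PseudoMetricSpace X] [Nonempty X]
    (hX : FiniteDoubling X) {r : ℝ} (hr0 : 0 < r) (hr1 : r < 1) : Nonempty (NestedNets X r) := by
  obtain ⟨x₀⟩ := ‹Nonempty X›
  obtain ⟨M, hx₀, hM⟩ := exists_maximal_isNestedPacking r x₀
  refine ⟨⟨M, x₀, hr0, hr1, hM.1.1, hx₀, hM.1.2, fun k u hu => ?_, fun y k => ?_,
    fun k x R => hX.finite_of_subset_closedBall (zpow_pos hr0 k) inter_subset_right
      ((hM.1.2 k).mono inter_subset_left)⟩⟩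
  · by_cases huk : u ∈ M k
    · exact ⟨u, huk, by simpa using zpow_pos hr0 k⟩
    obtain ⟨m, hkm, v, hv, hvu, huv⟩ := hM.exists_dist_lt_of_notMem huk
    rcases hkm.eq_or_lt with rfl | hkm
    · exact ⟨v, hv, huv⟩
    · exact absurd huv (hM.1.2 m (hM.1.1 (Int.add_one_le_of_lt hkm) hu) hv hvu.symm).not_gt
  · by_cases hy : ∃ n, k ≤ n ∧ y ∈ M n
    · obtain ⟨n, hkn, hyn⟩ := hy
      exact ⟨n, hkn, y, hyn, by simpa using zpow_pos hr0 n⟩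
    push Not at hy
    obtain ⟨m, hkm, v, hv, -, hyv⟩ := hM.exists_dist_lt_of_notMem (hy k le_rfl)
    exact ⟨m, hkm, v, hv, hyv⟩

namespace NestedNets

variable {X : Type*} [PseudoMetricSpace X] {r : ℝ} (N : NestedNets X r)

theorem mem_succ {k : ℤ} {x : X} (hx : x ∈ N.M k) : x ∈ N.M (k + 1) :=
  N.mono (Int.le_add_one le_rfl) hx

theorem countable (k : ℤ) : (N.M k).Countable := by
  have : N.M k ⊆ ⋃ n : ℕ, N.M k ∩ closedBall N.base n := fun x hx =>
    mem_iUnion.2 ⟨⌈dist x N.base⌉₊, hx, mem_closedBall.2 (Nat.le_ceil _)⟩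
  exact (countable_iUnion fun n => (N.finite_inter_closedBall k _ _).countable).mono this

noncomputable def enum (k : ℤ) : ℕ → X :=
  ((N.countable k).exists_eq_range ⟨N.base, N.base_mem k⟩).choose

theorem range_enum (k : ℤ) : range (N.enum k) = N.M k :=
  ((N.countable k).exists_eq_range ⟨N.base, N.base_mem k⟩).choose_spec.symm

theorem enum_mem (k : ℤ) (i : ℕ) : N.enum k i ∈ N.M k :=
  N.range_enum k ▸ mem_range_self i

theorem exists_parent (k : ℤ) {u : X} (hu : u ∈ N.M (k + 1)) :
    ∃ v, v ∈ N.M k ∧ dist u v < r ^ k ∧ ∀ w ∈ N.M k, dist u w < r ^ k / 2 → w = v := by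
  by_cases h : ∃ w ∈ N.M k, dist u w < r ^ k / 2
  · obtain ⟨w, hw, huw⟩ := h
    refine ⟨w, hw, huw.trans (half_lt_self (zpow_pos N.r_pos k)), fun w' hw' huw' => ?_⟩
    by_contra hne
    have := N.pairwise_le_dist k hw' hw hne
    have := dist_triangle_left w' w u
    linarith
  · push Not at h
    obtain ⟨v, hv, huv⟩ := N.exists_dist_lt_of_mem_succ k u hu
    exact ⟨v, hv, huv, fun w hw huw => absurd huw (h w hw).not_gt⟩

noncomputable def parent (k : ℤ) (u : X) : X :=
  haveI : Nonempty X := ⟨N.base⟩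
  Classical.epsilon fun v => v ∈ N.M k ∧ dist u v < r ^ k ∧
    ∀ w ∈ N.M k, dist u w < r ^ k / 2 → w = v

variable {N}

theorem parent_spec {k : ℤ} {u : X} (hu : u ∈ N.M (k + 1)) :
    N.parent k u ∈ N.M k ∧ dist u (N.parent k u) < r ^ k ∧
      ∀ w ∈ N.M k, dist u w < r ^ k / 2 → w = N.parent k u :=
  haveI : Nonempty X := ⟨N.base⟩
  Classical.epsilon_spec (N.exists_parent k hu)

theorem parent_eq_of_dist_lt {k : ℤ} {u w : X} (hu : u ∈ N.M (k + 1)) (hw : w ∈ N.M k)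
    (huw : dist u w < r ^ k / 2) : N.parent k u = w :=
  ((parent_spec hu).2.2 w hw huw).symm

theorem parent_self {k : ℤ} {x : X} (hx : x ∈ N.M k) : N.parent k x = x :=
  parent_eq_of_dist_lt (N.mem_succ hx) hx (by simpa using zpow_pos N.r_pos k)

variable (N)

def children (k : ℤ) (x : X) : Set X := {u ∈ N.M (k + 1) | N.parent k u = x}

theorem finite_children (k : ℤ) (x : X) : (N.children k x).Finite :=
  (N.finite_inter_closedBall (k + 1) x (r ^ k)).subset fun _u ⟨hu, hux⟩ =>
    ⟨hu, mem_closedBall.2 (hux ▸ (parent_spec hu).2.1.le)⟩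

inductive IsDescendant : ℤ → X → X → Prop
  | refl {k : ℤ} {x : X} : x ∈ N.M k → IsDescendant k x x
  | child {k : ℤ} {x u w : X} : u ∈ N.children k x → IsDescendant (k + 1) u w →
      IsDescendant k x w

variable {N}

theorem mem_of_isDescendant {k : ℤ} {x w : X} (h : N.IsDescendant k x w) : x ∈ N.M k := by
  cases h with
  | refl hx => exact hx
  | child hu _ => exact hu.2 ▸ (parent_spec hu.1).1

theorem dist_lt_of_isDescendant {k : ℤ} {x w : X} (h : N.IsDescendant k x w) :
    dist w x < 1 / (1 - r) * r ^ k := by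
  have h1r : 0 < 1 - r := sub_pos.2 N.r_lt_one
  induction h with
  | @refl k x _ => simpa using mul_pos (one_div_pos.2 h1r) (zpow_pos N.r_pos k)
  | @child k x u w hu _ ih =>
    have hux : dist u x < r ^ k := hu.2 ▸ (parent_spec hu.1).2.1
    calc dist w x ≤ dist w u + dist u x := dist_triangle _ _ _
      _ < 1 / (1 - r) * r ^ (k + 1) + r ^ k := add_lt_add ih hux
      _ = 1 / (1 - r) * r ^ k := by
        rw [zpow_add_one₀ N.r_pos.ne']
        field_simp
        ring

/-- Either `u = x'`, which is `r ^ k`-far from the other points of level `k`, or `u` descends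
from a child of `x'` lying within `r ^ k / 2` of `x`, whose parent is then `x`. -/
theorem eq_of_isDescendant_of_dist_lt {k : ℤ} {x x' u : X} (hx : x ∈ N.M k)
    (h : N.IsDescendant k x' u) (hux : dist u x < (1 / 2 - r / (1 - r)) * r ^ k) : x' = x := by
  have h1r : 0 < 1 - r := sub_pos.2 N.r_lt_one
  have hrk := zpow_pos N.r_pos k
  cases h with
  | refl hx' =>
    by_contra hne
    have hsep := N.pairwise_le_dist k hx' hx hne
    have : 0 < r / (1 - r) * r ^ k := by have := N.r_pos; positivity
    nlinarith
  | child hv hvu =>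
    have hvx : dist _ x < r ^ k / 2 :=
      calc _ ≤ dist u _ + dist u x := dist_triangle_left _ _ _
        _ < 1 / (1 - r) * r ^ (k + 1) + (1 / 2 - r / (1 - r)) * r ^ k :=
          add_lt_add (dist_lt_of_isDescendant hvu) hux
        _ = r ^ k / 2 := by
          rw [zpow_add_one₀ N.r_pos.ne']
          field_simp
          ring
    rw [← hv.2, parent_eq_of_dist_lt hv.1 hx hvx]

theorem exists_isDescendant {n k : ℤ} {v : X} (hv : v ∈ N.M n) (hkn : k ≤ n) :
    ∃ x, N.IsDescendant k x v := by
  induction k, hkn using Int.leInductionDown with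
  | base => exact ⟨v, .refl hv⟩
  | pred m _ ih =>
    obtain ⟨x, hx⟩ := ih
    have hx' : N.IsDescendant (m - 1 + 1) x v := by rwa [sub_add_cancel]
    exact ⟨_, .child ⟨mem_of_isDescendant hx', rfl⟩ hx'⟩

variable (N)

def closedCube (k : ℤ) (x : X) : Set X := closure {w | N.IsDescendant k x w}

variable {N}

theorem closedCube_subset_closedBall {k : ℤ} {x : X} :
    N.closedCube k x ⊆ closedBall x (1 / (1 - r) * r ^ k) :=
  closure_minimal (fun _ hw => (dist_lt_of_isDescendant hw).le) isClosed_closedBall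

theorem mem_of_mem_closedCube {k : ℤ} {x z : X} (hz : z ∈ N.closedCube k x) : x ∈ N.M k := by
  obtain ⟨w, hw⟩ := closure_nonempty_iff.1 ⟨z, hz⟩
  exact mem_of_isDescendant hw

theorem eq_of_mem_closedCube_of_dist_lt {k : ℤ} {x x' z : X} (hx : x ∈ N.M k)
    (hz : z ∈ N.closedCube k x') (hzx : dist z x < (1 / 2 - r / (1 - r)) * r ^ k) : x' = x := by
  obtain ⟨u, hux, hu⟩ := mem_closure_iff.1 hz (ball x _) isOpen_ball hzx
  exact eq_of_isDescendant_of_dist_lt hx hu hux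

theorem setOf_isDescendant_eq_biUnion {k : ℤ} {x : X} (hx : x ∈ N.M k) :
    {w | N.IsDescendant k x w} = ⋃ u ∈ N.children k x, {w | N.IsDescendant (k + 1) u w} := by
  ext w
  simp only [mem_ofPred_eq, mem_iUnion₂, exists_prop]
  constructor
  · rintro (_ | ⟨hu, hw⟩)
    · exact ⟨x, ⟨N.mem_succ hx, parent_self hx⟩, .refl (N.mem_succ hx)⟩
    · exact ⟨_, hu, hw⟩
  · rintro ⟨u, hu, hw⟩
    exact .child hu hw

theorem exists_child_mem_closedCube {k : ℤ} {x z : X} (hz : z ∈ N.closedCube k x) :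
    ∃ u ∈ N.children k x, z ∈ N.closedCube (k + 1) u := by
  rw [closedCube, setOf_isDescendant_eq_biUnion (mem_of_mem_closedCube hz),
    (N.finite_children k x).closure_biUnion] at hz
  obtain ⟨u, hu, hzu⟩ := mem_iUnion₂.1 hz
  exact ⟨u, hu, hzu⟩

theorem closedCube_subset_closedCube_parent {k : ℤ} {u : X} (hu : u ∈ N.M (k + 1)) :
    N.closedCube (k + 1) u ⊆ N.closedCube k (N.parent k u) :=
  closure_mono fun _ hw => .child ⟨hu, rfl⟩ hw

/-- The nets approximate `z` from ever finer levels, and the ancestors at level `k` of the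
approximating points range over a finite set. -/
theorem exists_mem_closedCube (z : X) (k : ℤ) : ∃ x, z ∈ N.closedCube k x := by
  have hr0 := N.r_pos
  have hr1 := N.r_lt_one
  choose n hkn v hv hzv using fun j : ℕ => N.exists_dist_lt z (k + j)
  have hkn' : ∀ j, k ≤ n j := fun j => (Int.le_add_of_nonneg_right j.cast_nonneg).trans (hkn j)
  choose a ha using fun j => exists_isDescendant (hv j) (hkn' j)
  have hfin : (range a).Finite := by
    refine (N.finite_inter_closedBall k z (1 / (1 - r) * r ^ k + r ^ k)).subset ?_
    rintro _ ⟨j, rfl⟩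
    refine ⟨mem_of_isDescendant (ha j), mem_closedBall.2 ?_⟩
    have := dist_lt_of_isDescendant (ha j)
    have := zpow_le_zpow_right_of_le_one₀ hr0 hr1.le (hkn' j)
    linarith [dist_triangle_left (a j) z (v j), dist_comm z (v j), hzv j]
  obtain ⟨x, hx⟩ : ∃ x, ∃ᶠ j in atTop, a j = x := by
    by_contra! h
    obtain ⟨j, hj⟩ := ((eventually_all_finite hfin).2 fun x _ => h x).exists
    exact hj (a j) (mem_range_self j) rfl
  have hlim : Tendsto v atTop (𝓝 z) := by
    refine tendsto_iff_dist_tendsto_zero.2 (squeeze_zero (fun _ => dist_nonneg) (fun j => ?_)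
      (by simpa using (tendsto_pow_atTop_nhds_zero_of_lt_one hr0.le hr1).const_mul (r ^ k)))
    rw [dist_comm, ← zpow_natCast, ← zpow_add₀ hr0.ne']
    exact (hzv j).le.trans (zpow_le_zpow_right_of_le_one₀ hr0 hr1.le (hkn j))
  exact ⟨x, mem_closure_of_frequently_of_tendsto (hx.mono fun j hj => hj ▸ ha j) hlim⟩

theorem exists_enum_mem_closedCube (z : X) (k : ℤ) : ∃ j, z ∈ N.closedCube k (N.enum k j) := by
  obtain ⟨x, hx⟩ := N.exists_mem_closedCube z k
  obtain ⟨j, rfl⟩ : x ∈ range (N.enum k) := N.range_enum k ▸ mem_of_mem_closedCube hx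
  exact ⟨j, hx⟩

theorem exists_enum_mem_children {k : ℤ} {x z : X} (hz : z ∈ N.closedCube k x) :
    ∃ j, N.enum (k + 1) j ∈ N.children k x ∧ z ∈ N.closedCube (k + 1) (N.enum (k + 1) j) := by
  obtain ⟨u, hu, hzu⟩ := exists_child_mem_closedCube hz
  obtain ⟨j, rfl⟩ : u ∈ range (N.enum (k + 1)) := N.range_enum _ ▸ hu.1
  exact ⟨j, hu, hzu⟩

variable (N)

/-- Taking the first admissible index at each level is what makes the choice Borel. -/
noncomputable def centerIdx : ℕ → X → ℕ
  | 0, z => sInf {j | z ∈ N.closedCube 0 (N.enum 0 j)}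
  | n + 1, z => sInf {j | N.enum (n + 1) j ∈ N.children n (N.enum n (centerIdx n z)) ∧
      z ∈ N.closedCube (n + 1) (N.enum (n + 1) j)}

theorem mem_closedCube_centerIdx : ∀ (n : ℕ) (z : X),
    z ∈ N.closedCube n (N.enum n (N.centerIdx n z))
  | 0, z => Nat.sInf_mem (N.exists_enum_mem_closedCube z 0)
  | n + 1, z => by
    have := (Nat.sInf_mem (exists_enum_mem_children (mem_closedCube_centerIdx n z))).2
    exact_mod_cast this

theorem enum_centerIdx_succ_mem_children (n : ℕ) (z : X) :
    N.enum (n + 1) (N.centerIdx (n + 1) z) ∈ N.children n (N.enum n (N.centerIdx n z)) :=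
  (Nat.sInf_mem (exists_enum_mem_children (N.mem_closedCube_centerIdx n z))).1

theorem measurable_centerIdx [MeasurableSpace X] [OpensMeasurableSpace X] :
    ∀ n, Measurable (N.centerIdx n)
  | 0 => measurable_sInf_setOf_nat (N.exists_enum_mem_closedCube · 0)
      fun _ => isClosed_closure.measurableSet
  | n + 1 =>
    measurable_sInf_setOf_nat (fun z => exists_enum_mem_children (N.mem_closedCube_centerIdx n z))
      fun j => (measurable_centerIdx n (MeasurableSet.of_discrete
        (s := {i | N.enum (n + 1) j ∈ N.children n (N.enum n i)}))).inter
          isClosed_closure.measurableSet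

/-- `N.ancestor n x` is the ancestor at level `-n` of a point `x` of level `0`. -/
noncomputable def ancestor : ℕ → X → X
  | 0, x => x
  | n + 1, x => N.parent (Int.negSucc n) (ancestor n x)

/-- The centre of the level-`k` cube containing `z`. -/
noncomputable def center : ℤ → X → X
  | (n : ℕ), z => N.enum n (N.centerIdx n z)
  | Int.negSucc n, z => N.ancestor (n + 1) (N.enum 0 (N.centerIdx 0 z))

theorem parent_center_succ (k : ℤ) (z : X) : N.parent k (N.center (k + 1) z) = N.center k z :=
  match k with
  | (n : ℕ) => (N.enum_centerIdx_succ_mem_children n z).2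
  | Int.negSucc 0 => rfl
  | Int.negSucc (n + 1) => by rw [show Int.negSucc (n + 1) + 1 = Int.negSucc n by omega]; rfl

theorem mem_closedCube_center (k : ℤ) (z : X) : z ∈ N.closedCube k (N.center k z) := by
  induction k using Int.induction_on with
  | zero => exact N.mem_closedCube_centerIdx 0 z
  | succ n _ => exact_mod_cast N.mem_closedCube_centerIdx (n + 1) z
  | pred n ih =>
    have h : z ∈ N.closedCube (-n - 1 + 1) (N.center (-n - 1 + 1) z) := by rwa [sub_add_cancel]
    rw [← N.parent_center_succ]
    exact closedCube_subset_closedCube_parent (mem_of_mem_closedCube h) h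

theorem center_mem (k : ℤ) (z : X) : N.center k z ∈ N.M k :=
  mem_of_mem_closedCube (N.mem_closedCube_center k z)

theorem center_eq_center_of_le {m k : ℤ} (hmk : m ≤ k) {z z' : X}
    (h : N.center k z = N.center k z') : N.center m z = N.center m z' := by
  induction m, hmk using Int.leInductionDown with
  | base => exact h
  | pred m _ ih =>
    rw [← N.parent_center_succ (m - 1) z, ← N.parent_center_succ (m - 1) z', sub_add_cancel, ih]

def cube (k : ℤ) (x : X) : Set X := {z | N.center k z = x}

theorem measurableSet_cube [MeasurableSpace X] [OpensMeasurableSpace X] (k : ℤ) (x : X) :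
    MeasurableSet (N.cube k x) :=
  match k with
  | (n : ℕ) => N.measurable_centerIdx n (MeasurableSet.of_discrete (s := {j | N.enum n j = x}))
  | Int.negSucc m => N.measurable_centerIdx 0
      (MeasurableSet.of_discrete (s := {j | N.ancestor (m + 1) (N.enum 0 j) = x}))

theorem cube_inter_eq_empty_or_subset {m k : ℤ} (hmk : m ≤ k) (x y : X) :
    N.cube k x ∩ N.cube m y = ∅ ∨ N.cube k x ⊆ N.cube m y := by
  rcases eq_empty_or_nonempty (N.cube k x ∩ N.cube m y) with h | ⟨z, hzx, hzy⟩
  · exact .inl h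
  · exact .inr fun z' hz' => (N.center_eq_center_of_le hmk (hz'.trans hzx.symm)).trans hzy

theorem ball_subset_cube {k : ℤ} {x : X} (hx : x ∈ N.M k) :
    ball x ((1 / 2 - r / (1 - r)) * r ^ k) ⊆ N.cube k x := fun z hz =>
  eq_of_mem_closedCube_of_dist_lt hx (N.mem_closedCube_center k z) hz

theorem cube_subset_closedBall (k : ℤ) (x : X) :
    N.cube k x ⊆ closedBall x (1 / (1 - r) * r ^ k) := by
  rintro z rfl
  exact closedCube_subset_closedBall (N.mem_closedCube_center k z)

end NestedNets

/-- Generalised dyadic cubes: in a metric space with the finite doubling property, for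
`0 < r < 1/3` there are index sets `N k ⊆ ℕ`, Borel sets `Q k i` and centres `xc k i`
satisfying (i) each level covers `X`; (ii) nestedness; (iii) inner open ball of radius
`c r^k` and outer closed ball of radius `C r^k` with `c = 1/2 - r/(1-r)`, `C = 1/(1-r)`;
(iv) a fixed point `x₀` with `U(x₀, c r^k)` contained in some level-`k` cube for all `k`;
(v) centres at level `k` are among the centres at level `k+1`. -/
theorem exists_generalised_dyadic_cubes {X : Type*} [MetricSpace X] [MeasurableSpace X]
    [BorelSpace X] [Nonempty X]
    (hFD : ∀ (x : X) (ρ : ℝ), ∃ s : Finset X,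
      Metric.closedBall x (2 * ρ) ⊆ ⋃ y ∈ s, Metric.closedBall y ρ)
    (r : ℝ) (hr0 : 0 < r) (hr : r < 1 / 3) :
    ∃ (N : ℤ → Set ℕ) (Q : ℤ → ℕ → Set X) (xc : ℤ → ℕ → X) (x₀ : X),
      (∀ (k : ℤ), ∀ i ∈ N k, MeasurableSet (Q k i)) ∧
      (∀ k : ℤ, ⋃ i ∈ N k, Q k i = Set.univ) ∧
      (∀ (k m : ℤ), m ≤ k → ∀ i ∈ N k, ∀ j ∈ N m,
        Q k i ∩ Q m j = ∅ ∨ Q k i ⊆ Q m j) ∧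
      (∀ (k : ℤ), ∀ i ∈ N k,
        Metric.ball (xc k i) ((1 / 2 - r / (1 - r)) * r ^ k) ⊆ Q k i ∧
        Q k i ⊆ Metric.closedBall (xc k i) ((1 / (1 - r)) * r ^ k)) ∧
      (∀ k : ℤ, ∃ i ∈ N k, Metric.ball x₀ ((1 / 2 - r / (1 - r)) * r ^ k) ⊆ Q k i) ∧
      (∀ (k : ℤ), ∀ i ∈ N k, ∃ j ∈ N (k + 1), xc (k + 1) j = xc k i) := by
  obtain ⟨S⟩ := FiniteDoubling.nonempty_nestedNets hFD hr0 (hr.trans (by norm_num))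
  have first_index {k : ℤ} {x : X} (hx : x ∈ S.M k) :
      ∃ i ∈ {i | ∀ j < i, S.enum k j ≠ S.enum k i}, S.enum k i = x :=
    exists_first_index (S.range_enum k ▸ hx)
  refine ⟨fun k => {i | ∀ j < i, S.enum k j ≠ S.enum k i}, fun k i => S.cube k (S.enum k i),
    S.enum, S.base, fun k i _ => S.measurableSet_cube k _, fun k => ?_,
    fun k m hmk i _ j _ => S.cube_inter_eq_empty_or_subset hmk _ _,
    fun k i _ => ⟨S.ball_subset_cube (S.enum_mem k i), S.cube_subset_closedBall k _⟩,
    fun k => ?_, fun k i _ => first_index (S.mem_succ (S.enum_mem k i))⟩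
  · refine eq_univ_of_forall fun z => mem_iUnion₂.2 ?_
    obtain ⟨i, hi, hiz⟩ := first_index (S.center_mem k z)
    exact ⟨i, hi, hiz.symm⟩
  · obtain ⟨i, hi, hix⟩ := first_index (S.base_mem k)
    exact ⟨i, hi, by rw [← hix]; exact S.ball_subset_cube (S.enum_mem k i)⟩
end

section
/- Suppose 0 < r < 1/3 and for each k ∈ ℤ the set {x_{k,i} : i ∈ N_k} is r^k-separated, with each point at level k+1 assigned a nearest-point parent at level k (so the parent is within distance r^k). If n > k and x_{n,j} is NOT a descendant of x_{k,i}, then d(x_{k,i}, x_{n,j}) ≥ (1/2 − r/(1−r)) r^k. -/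
open Metric Set

/-! Follow the ancestry of `xc n j` up to level `k + 1`, reaching some `c`. The walk costs at most
`r^(k+1) + r^(k+2) + ⋯ = r^(k+1)/(1-r)`. Since `xc n j` is not a descendant of `xc k i`, the parent
of `c` is a level-`k` point other than `i`, hence `r^k`-far from `xc k i`; being the point of
level `k` nearest to `xc (k+1) c`, it forces `xc (k+1) c` to be at least `r^k/2` away from `xc k i`. -/

lemma half_dist_le_of_dist_le_dist {X : Type*} [PseudoMetricSpace X] {a b y : X}
    (h : dist y b ≤ dist y a) : dist a b / 2 ≤ dist a y := by
  linarith [dist_triangle a y b, dist_comm y a]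

def IsDescentPath (N : ℤ → Set ℕ) (parent : ℤ → ℕ → ℕ) (k n : ℤ) (f : ℤ → ℕ) : Prop :=
  ∀ m : ℤ, k ≤ m → m < n → f (m + 1) ∈ N (m + 1) ∧ parent (m + 1) (f (m + 1)) = f m

namespace IsDescentPath

variable {N : ℤ → Set ℕ} {parent : ℤ → ℕ → ℕ} {k n : ℤ} {f : ℤ → ℕ}

lemma refl (k : ℤ) (f : ℤ → ℕ) : IsDescentPath N parent k k f :=
  fun _ hkm hmk => absurd hkm (not_le.2 hmk)

lemma of_succ (hf : IsDescentPath N parent k (n + 1) f) : IsDescentPath N parent k n f :=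
  fun m hkm hmn => hf m hkm (by omega)

lemma snoc (hf : IsDescentPath N parent k n f) (hkn : k ≤ n) {j : ℕ} (hj : j ∈ N (n + 1))
    (hpj : parent (n + 1) j = f n) :
    IsDescentPath N parent k (n + 1) (Function.update f (n + 1) j) := by
  intro m hkm hmn
  rcases (show m < n ∨ m = n by omega) with hmn' | rfl
  · simpa [Function.update_of_ne (show m + 1 ≠ n + 1 by omega),
      Function.update_of_ne (show m ≠ n + 1 by omega)] using hf m hkm hmn'
  · simpa [Function.update_of_ne (show m ≠ m + 1 by omega)] using ⟨hj, hpj⟩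

lemma cons (hf : IsDescentPath N parent (k + 1) n f) (hmem : f (k + 1) ∈ N (k + 1)) {i : ℕ}
    (hpi : parent (k + 1) (f (k + 1)) = i) :
    IsDescentPath N parent k n (Function.update f k i) := by
  intro m hkm hmn
  rcases (show m = k ∨ k + 1 ≤ m by omega) with rfl | hkm'
  · simpa [Function.update_of_ne (show m + 1 ≠ m by omega)] using ⟨hmem, hpi⟩
  · simpa [Function.update_of_ne (show m + 1 ≠ k by omega),
      Function.update_of_ne (show m ≠ k by omega)] using hf m hkm' hmn

lemma dist_le {X : Type*} [PseudoMetricSpace X] {xc : ℤ → ℕ → X} {r : ℝ} (hr0 : 0 < r)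
    (hr1 : r < 1)
    (hpar : ∀ (m : ℤ), ∀ i ∈ N (m + 1), dist (xc (m + 1) i) (xc m (parent (m + 1) i)) ≤ r ^ m)
    (hkn : k ≤ n) (hf : IsDescentPath N parent k n f) :
    dist (xc k (f k)) (xc n (f n)) ≤ (r ^ k - r ^ n) / (1 - r) := by
  induction n, hkn using Int.leInduction with
  | base => simp
  | succ n hkn ih =>
    obtain ⟨hmem, hparent⟩ := hf n hkn (lt_add_one n)
    have hstep : dist (xc n (f n)) (xc (n + 1) (f (n + 1))) ≤ r ^ n := by
      rw [dist_comm, ← hparent]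
      exact hpar n _ hmem
    have h1r : 0 < 1 - r := by linarith
    calc dist (xc k (f k)) (xc (n + 1) (f (n + 1)))
        ≤ (r ^ k - r ^ n) / (1 - r) + r ^ n :=
          (dist_triangle _ _ _).trans (add_le_add (ih hf.of_succ) hstep)
      _ = (r ^ k - r ^ (n + 1)) / (1 - r) := by
          rw [zpow_add_one₀ hr0.ne']
          field_simp
          ring

end IsDescentPath

lemma exists_isDescentPath {N : ℤ → Set ℕ} {parent : ℤ → ℕ → ℕ}
    (hparN : ∀ (m : ℤ), ∀ i ∈ N (m + 1), parent (m + 1) i ∈ N m) {k n : ℤ} (hkn : k ≤ n)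
    {j : ℕ} (hj : j ∈ N n) :
    ∃ f : ℤ → ℕ, f n = j ∧ f k ∈ N k ∧ IsDescentPath N parent k n f := by
  induction n, hkn using Int.leInduction generalizing j with
  | base => exact ⟨fun _ => j, rfl, hj, .refl k _⟩
  | succ n hkn ih =>
    obtain ⟨f, hfn, hfk, hf⟩ := ih (hparN n j hj)
    refine ⟨Function.update f (n + 1) j, by simp, ?_, hf.snoc hkn hj hfn.symm⟩
    rwa [Function.update_of_ne (by omega)]

theorem non_descendants_far_general {X : Type*} [MetricSpace X]
    (r : ℝ) (hr0 : 0 < r) (hr : r < 1 / 3)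
    (N : ℤ → Set ℕ) (xc : ℤ → ℕ → X) (parent : ℤ → ℕ → ℕ)
    (hsep : ∀ (k : ℤ), ∀ i ∈ N k, ∀ j ∈ N k, i ≠ j → r ^ k ≤ dist (xc k i) (xc k j))
    (hnear : ∀ (k : ℤ), ∀ i ∈ N (k + 1), parent (k + 1) i ∈ N k ∧
      ∀ j ∈ N k, dist (xc (k + 1) i) (xc k (parent (k + 1) i)) ≤ dist (xc (k + 1) i) (xc k j))
    (hpar : ∀ (k : ℤ), ∀ i ∈ N (k + 1),
      dist (xc (k + 1) i) (xc k (parent (k + 1) i)) ≤ r ^ k) :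
    ∀ (k n : ℤ), k < n → ∀ i ∈ N k, ∀ j ∈ N n,
      (¬ ∃ f : ℤ → ℕ, f k = i ∧ f n = j ∧
        ∀ m : ℤ, k ≤ m → m < n → f (m + 1) ∈ N (m + 1) ∧ parent (m + 1) (f (m + 1)) = f m) →
      (1 / 2 - r / (1 - r)) * r ^ k ≤ dist (xc k i) (xc n j) := by
  intro k n hkn i hi j hj hnd
  have hr1 : r < 1 := by linarith
  obtain ⟨f, hfn, hfc, hf⟩ := exists_isDescentPath (fun m i hi => (hnear m i hi).1) hkn hj
  set c := f (k + 1)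
  obtain ⟨hpc, hc_nearest⟩ := hnear k c hfc
  have hpi : parent (k + 1) c ≠ i := fun hpi =>
    hnd ⟨Function.update f k i, by simp, by simp [hkn.ne', hfn], hf.cons hfc hpi⟩
  have hfar : r ^ k / 2 ≤ dist (xc k i) (xc (k + 1) c) :=
    (div_le_div_of_nonneg_right (hsep k i hi _ hpc hpi.symm) zero_le_two).trans
      (half_dist_le_of_dist_le_dist (hc_nearest i hi))
  have hwalk : dist (xc (k + 1) c) (xc n j) ≤ r ^ (k + 1) / (1 - r) := by
    exact (hfn ▸ hf.dist_le (xc := xc) hr0 hr1 hpar hkn).trans <|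
      div_le_div_of_nonneg_right (by linarith [zpow_pos hr0 n]) (by linarith)
  calc (1 / 2 - r / (1 - r)) * r ^ k = r ^ k / 2 - r ^ (k + 1) / (1 - r) := by
        rw [zpow_add_one₀ hr0.ne']; ring
    _ ≤ dist (xc k i) (xc n j) := by
        linarith [dist_triangle (xc k i) (xc n j) (xc (k + 1) c), dist_comm (xc n j) (xc (k + 1) c)]

/-- If the level-`k` points form maximal `r^k`-separated sets and parents are chosen as
nearest points at the previous level (hence at distance at most `r^k`), then any point
`xc n j` at a deeper level `n > k` that is NOT a descendant of `xc k i` satisfies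
`dist (xc k i) (xc n j) ≥ (1/2 - r/(1-r)) r^k`. -/
theorem non_descendants_far {X : Type*} [MetricSpace X]
    (r : ℝ) (hr0 : 0 < r) (hr : r < 1 / 3)
    (N : ℤ → Set ℕ) (xc : ℤ → ℕ → X) (parent : ℤ → ℕ → ℕ)
    (hsep : ∀ (k : ℤ), ∀ i ∈ N k, ∀ j ∈ N k, i ≠ j → r ^ k ≤ dist (xc k i) (xc k j))
    (hmax : ∀ (k : ℤ) (y : X), ∃ i ∈ N k, dist y (xc k i) ≤ r ^ k)
    (hnear : ∀ (k : ℤ), ∀ i ∈ N (k + 1), parent (k + 1) i ∈ N k ∧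
      ∀ j ∈ N k, dist (xc (k + 1) i) (xc k (parent (k + 1) i)) ≤ dist (xc (k + 1) i) (xc k j))
    (hpar : ∀ (k : ℤ), ∀ i ∈ N (k + 1),
      dist (xc (k + 1) i) (xc k (parent (k + 1) i)) ≤ r ^ k) :
    ∀ (k n : ℤ), k < n → ∀ i ∈ N k, ∀ j ∈ N n,
      (¬ ∃ f : ℤ → ℕ, f k = i ∧ f n = j ∧
        ∀ m : ℤ, k ≤ m → m < n → f (m + 1) ∈ N (m + 1) ∧ parent (m + 1) (f (m + 1)) = f m) →
      (1 / 2 - r / (1 - r)) * r ^ k ≤ dist (xc k i) (xc n j) :=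
  non_descendants_far_general r hr0 hr N xc parent hsep hnear hpar
end

section
/- Let X be a metric space with the finite doubling property, 0 < r ≤ 1/7, and let {Q_{k,i}} be generalised dyadic cubes with centers x_{k,i} satisfying U(x_{k,i}, c r^k) ⊂ Q_{k,i} ⊂ B(x_{k,i}, C r^k) with c = 1/2 − r/(1−r), C = 1/(1−r), and center-preservation: for each (k,i) there is l ∈ N_{k+1} with x_{k+1,l} = x_{k,i} and Q_{k+1,l} ⊂ Q_{k,i}. Then the closure of Q_{k+1,l} is contained in the interior of Q_{k,i}; in fact, closure(Q_{k+1,l}) ⊂ B(x_{k,i}, C r^{k+1}) ⊂ U(x_{k,i}, c r^k) ⊂ Q_{k,i}. -/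
open Metric Set

/-! Since `Q (k+1) l` shares its centre with `Q k i`, its closure lies in the closed ball of
radius `C r^{k+1}` about that centre, and `C r^{k+1} < c r^k` as soon as `r < 1/5`; so this
closed ball sits inside the open inner ball of `Q k i`, which is part of its interior. -/

lemma div_one_sub_lt_half_sub_div_one_sub {r : ℝ} (hr : r < 1 / 5) :
    r / (1 - r) < 1 / 2 - r / (1 - r) := by
  have h1r : 0 < 1 - r := by linarith
  rw [lt_sub_iff_add_lt, ← add_div, div_lt_iff₀ h1r]
  linarith

lemma one_div_one_sub_mul_zpow_succ_lt {r : ℝ} (hr0 : 0 < r) (hr : r < 1 / 5) (k : ℤ) :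
    1 / (1 - r) * r ^ (k + 1) < (1 / 2 - r / (1 - r)) * r ^ k := by
  calc 1 / (1 - r) * r ^ (k + 1) = r / (1 - r) * r ^ k := by
        rw [zpow_add_one₀ hr0.ne']; ring
    _ < (1 / 2 - r / (1 - r)) * r ^ k :=
        mul_lt_mul_of_pos_right (div_one_sub_lt_half_sub_div_one_sub hr) (zpow_pos hr0 k)

theorem central_child_closure_subset_interior_general {X : Type*} [MetricSpace X]
    (r c C : ℝ) (hr0 : 0 < r) (hr : r ≤ 1 / 7)
    (hc : c = 1 / 2 - r / (1 - r)) (hC : C = 1 / (1 - r))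
    (N : ℤ → Set ℕ) (Q : ℤ → ℕ → Set X) (xc : ℤ → ℕ → X)
    (hball : ∀ (k : ℤ), ∀ i ∈ N k,
      Metric.ball (xc k i) (c * r ^ k) ⊆ Q k i ∧
      Q k i ⊆ Metric.closedBall (xc k i) (C * r ^ k))
    (k : ℤ) (i l : ℕ) (hi : i ∈ N k) (hl : l ∈ N (k + 1))
    (hx : xc (k + 1) l = xc k i) :
    closure (Q (k + 1) l) ⊆ Metric.closedBall (xc k i) (C * r ^ (k + 1)) ∧
    Metric.closedBall (xc k i) (C * r ^ (k + 1)) ⊆ Metric.ball (xc k i) (c * r ^ k) ∧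
    Metric.ball (xc k i) (c * r ^ k) ⊆ Q k i ∧
    closure (Q (k + 1) l) ⊆ interior (Q k i) := by
  have hradius : C * r ^ (k + 1) < c * r ^ k := by
    rw [hc, hC]
    exact one_div_one_sub_mul_zpow_succ_lt hr0 (by linarith) k
  have hparent : ball (xc k i) (c * r ^ k) ⊆ Q k i := (hball k i hi).1
  have hchild : Q (k + 1) l ⊆ closedBall (xc k i) (C * r ^ (k + 1)) :=
    hx ▸ (hball (k + 1) l hl).2
  have hclosure : closure (Q (k + 1) l) ⊆ closedBall (xc k i) (C * r ^ (k + 1)) :=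
    closure_minimal hchild isClosed_closedBall
  have hnested : closedBall (xc k i) (C * r ^ (k + 1)) ⊆ ball (xc k i) (c * r ^ k) :=
    closedBall_subset_ball hradius
  exact ⟨hclosure, hnested, hparent,
    (hclosure.trans hnested).trans (interior_maximal hparent isOpen_ball)⟩

/-- For generalised dyadic cubes with `0 < r ≤ 1/7`, the closure of a centre-preserving
child `Q (k+1) l` (with `xc (k+1) l = xc k i`) is contained in
`B(xc k i, C r^{k+1}) ⊆ U(xc k i, c r^k) ⊆ Q k i`; in particular it is contained in the
interior of the parent cube `Q k i`. -/
theorem central_child_closure_subset_interior {X : Type*} [MetricSpace X]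
    (r c C : ℝ) (hr0 : 0 < r) (hr : r ≤ 1 / 7)
    (hc : c = 1 / 2 - r / (1 - r)) (hC : C = 1 / (1 - r))
    (N : ℤ → Set ℕ) (Q : ℤ → ℕ → Set X) (xc : ℤ → ℕ → X)
    (hball : ∀ (k : ℤ), ∀ i ∈ N k,
      Metric.ball (xc k i) (c * r ^ k) ⊆ Q k i ∧
      Q k i ⊆ Metric.closedBall (xc k i) (C * r ^ k))
    (k : ℤ) (i l : ℕ) (hi : i ∈ N k) (hl : l ∈ N (k + 1))
    (hx : xc (k + 1) l = xc k i) (hQ : Q (k + 1) l ⊆ Q k i) :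
    closure (Q (k + 1) l) ⊆ Metric.closedBall (xc k i) (C * r ^ (k + 1)) ∧
    Metric.closedBall (xc k i) (C * r ^ (k + 1)) ⊆ Metric.ball (xc k i) (c * r ^ k) ∧
    Metric.ball (xc k i) (c * r ^ k) ⊆ Q k i ∧
    closure (Q (k + 1) l) ⊆ interior (Q k i) :=
  central_child_closure_subset_interior_general r c C hr0 hr hc hC N Q xc hball k i l hi hl hx
end

section
/- Let X be a complete doubling metric space, 0 < r ≤ 1/7, {Q_{k,i}} generalised dyadic cubes, Σ the code space with projection π: Σ → X, and ν the doubling measure on Σ from the construction with parameter p. Then the pushforward μ = π_*ν satisfies μ(∂Q_{k,i}) = 0 for all k and i, and consequently μ(Q_{k,i}) = ν([k,i]). -/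
open Metric Set MeasureTheory ENNReal

/-!
Let `E = π⁻¹(∂Q k i)`. Every cylinder of level `m ≥ k` has a child cylinder that misses `E`:
the child through the centre of `Q m j` projects into `ball (xc m j) (c * r ^ m)`, which lies
either inside `Q k i` or outside it, hence misses its frontier (this is where `r ≤ 1/7` is
used, via `C * r < c`). Since `ν` is doubling and cylinders are balls, this child carries at
least a fraction `D⁻¹` of the mass of its parent, so the mass of `E` in a cylinder of level
`k + t` decays like `(1 - D⁻¹) ^ t` and `E` is `ν`-null. A null boundary makes `Q k i`, its
interior and its closure indistinguishable for `μ = π_* ν`, and these are squeezed between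
`π⁻¹(interior Q k i) ⊆ cyl k i ⊆ π⁻¹(closure Q k i)`.
-/

lemma one_div_one_sub_mul_lt {r : ℝ} (hr : r ≤ 1 / 7) : 1 / (1 - r) * r < 1 / 2 - r / (1 - r) := by
  have hr' : r / (1 - r) ≤ 1 / 6 := by rw [div_le_iff₀ (by linarith)]; linarith
  rw [one_div_mul_eq_div]
  linarith

lemma ENNReal.sub_le_one_sub_inv_mul {a b D : ℝ≥0∞} (ha : a ≠ ∞) (h : a ≤ D * b) :
    a - b ≤ (1 - D⁻¹) * a := by
  rw [ENNReal.sub_mul fun _ _ => ha, one_mul]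
  refine tsub_le_tsub_left ?_ a
  calc D⁻¹ * a ≤ D⁻¹ * (D * b) := by gcongr
    _ = D⁻¹ * D * b := (mul_assoc _ _ _).symm
    _ ≤ 1 * b := by gcongr; exact ENNReal.inv_mul_le_one D
    _ = b := one_mul b

lemma measure_le_mul_measure_biUnion {Y ι : Type*} [MeasurableSpace Y] {ν : Measure Y}
    {S : Set ι} (hS : S.Countable) {s : ι → Set Y} (hd : S.PairwiseDisjoint s)
    (hm : ∀ i ∈ S, MeasurableSet (s i)) {F : Set Y} (hF : F ⊆ ⋃ i ∈ S, s i) {q : ℝ≥0∞}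
    (hq : ∀ i ∈ S, ν (F ∩ s i) ≤ q * ν (s i)) :
    ν F ≤ q * ν (⋃ i ∈ S, s i) := by
  have hcov : F ⊆ ⋃ i ∈ S, F ∩ s i := by
    rw [← inter_iUnion₂]
    exact subset_inter subset_rfl hF
  calc ν F ≤ ∑' i : S, ν (F ∩ s i) := (measure_mono hcov).trans (measure_biUnion_le ν hS _)
    _ ≤ ∑' i : S, q * ν (s i) := ENNReal.tsum_le_tsum fun i => hq i i.2
    _ = q * ν (⋃ i ∈ S, s i) := by rw [ENNReal.tsum_mul_left, measure_biUnion hS hd hm]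

structure IsNestedPartition {Y : Type*} (N : ℤ → Set ℕ) (cyl : ℤ → ℕ → Set Y) : Prop where
  iUnion_eq_univ : ∀ m, ⋃ i ∈ N m, cyl m i = univ
  pairwiseDisjoint : ∀ m, (N m).PairwiseDisjoint (cyl m)
  subset_of_mem : ∀ m, ∀ j ∈ N m, ∀ l ∈ N (m + 1), ∀ σ ∈ cyl (m + 1) l, σ ∈ cyl m j →
    cyl (m + 1) l ⊆ cyl m j

def IsCylinderPorous {Y : Type*} (N : ℤ → Set ℕ) (cyl : ℤ → ℕ → Set Y) (k : ℤ) (E : Set Y) :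
    Prop :=
  ∀ m, k ≤ m → ∀ j ∈ N m, ∃ l ∈ N (m + 1), cyl (m + 1) l ⊆ cyl m j ∧ Disjoint (cyl (m + 1) l) E

namespace IsNestedPartition

variable {Y : Type*} {N : ℤ → Set ℕ} {cyl : ℤ → ℕ → Set Y}

lemma exists_mem (hP : IsNestedPartition N cyl) (m : ℤ) (σ : Y) : ∃ i ∈ N m, σ ∈ cyl m i := by
  have hσ : σ ∈ ⋃ i ∈ N m, cyl m i := hP.iUnion_eq_univ m ▸ mem_univ σ
  simpa only [mem_iUnion₂, exists_prop] using hσ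

lemma exists_child (hP : IsNestedPartition N cyl) {m : ℤ} {j : ℕ} (hj : j ∈ N m) {σ : Y}
    (hσ : σ ∈ cyl m j) : ∃ l ∈ N (m + 1), σ ∈ cyl (m + 1) l ∧ cyl (m + 1) l ⊆ cyl m j :=
  let ⟨l, hl, hσl⟩ := hP.exists_mem (m + 1) σ
  ⟨l, hl, hσl, hP.subset_of_mem m j hj l hl σ hσl hσ⟩

variable [MeasurableSpace Y] {ν : Measure Y} {D : ℝ≥0∞}

theorem measure_inter_le_mul_pow (hP : IsNestedPartition N cyl)
    (hmeas : ∀ m, ∀ j ∈ N m, MeasurableSet (cyl m j)) (hfin : ∀ m, ∀ j ∈ N m, ν (cyl m j) ≠ ∞)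
    (hdoub : ∀ m, ∀ j ∈ N m, ∀ l ∈ N (m + 1), cyl (m + 1) l ⊆ cyl m j →
      ν (cyl m j) ≤ D * ν (cyl (m + 1) l))
    {k : ℤ} {E : Set Y} (hE : IsCylinderPorous N cyl k E) (t : ℕ) :
    ∀ m, k ≤ m → ∀ j ∈ N m, ν (E ∩ cyl m j) ≤ ν (cyl m j) * (1 - D⁻¹) ^ t := by
  induction t with
  | zero => exact fun m _ j _ => by simpa using measure_mono inter_subset_right
  | succ t ih =>
    intro m hm j hj
    obtain ⟨l₀, hl₀, hsub, hholeE⟩ := hE m hm j hj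
    set S := {l ∈ N (m + 1) | l ≠ l₀ ∧ cyl (m + 1) l ⊆ cyl m j}
    have hcov : E ∩ cyl m j ⊆ ⋃ l ∈ S, cyl (m + 1) l := by
      rintro σ ⟨hσE, hσ⟩
      obtain ⟨l, hl, hσl, hlsub⟩ := hP.exists_child hj hσ
      exact mem_biUnion ⟨hl, by rintro rfl; exact hholeE.notMem_of_mem_left hσl hσE, hlsub⟩ hσl
    have hrest : ⋃ l ∈ S, cyl (m + 1) l ⊆ cyl m j \ cyl (m + 1) l₀ :=
      iUnion₂_subset fun l hl =>
        subset_sdiff.mpr ⟨hl.2.2, hP.pairwiseDisjoint _ hl.1 hl₀ hl.2.1⟩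
    have hq : ∀ l ∈ S, ν (E ∩ cyl m j ∩ cyl (m + 1) l) ≤
        (1 - D⁻¹) ^ t * ν (cyl (m + 1) l) := fun l hl => by
      rw [mul_comm]
      exact (measure_mono (inter_subset_inter_left _ inter_subset_left)).trans
        (ih (m + 1) (by omega) l hl.1)
    calc ν (E ∩ cyl m j) ≤ (1 - D⁻¹) ^ t * ν (⋃ l ∈ S, cyl (m + 1) l) :=
          measure_le_mul_measure_biUnion S.to_countable
            ((hP.pairwiseDisjoint _).subset fun l hl => hl.1) (fun l hl => hmeas _ l hl.1) hcov hq
      _ ≤ (1 - D⁻¹) ^ t * (ν (cyl m j) - ν (cyl (m + 1) l₀)) := by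
          rw [← measure_sdiff hsub (hmeas _ l₀ hl₀).nullMeasurableSet (hfin _ l₀ hl₀)]
          gcongr
      _ ≤ (1 - D⁻¹) ^ t * ((1 - D⁻¹) * ν (cyl m j)) := by
          gcongr
          exact ENNReal.sub_le_one_sub_inv_mul (hfin m j hj) (hdoub m j hj l₀ hl₀ hsub)
      _ = ν (cyl m j) * (1 - D⁻¹) ^ (t + 1) := by ring

theorem measure_eq_zero_of_isCylinderPorous (hP : IsNestedPartition N cyl)
    (hmeas : ∀ m, ∀ j ∈ N m, MeasurableSet (cyl m j)) (hfin : ∀ m, ∀ j ∈ N m, ν (cyl m j) ≠ ∞)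
    (hdoub : ∀ m, ∀ j ∈ N m, ∀ l ∈ N (m + 1), cyl (m + 1) l ⊆ cyl m j →
      ν (cyl m j) ≤ D * ν (cyl (m + 1) l))
    (hD : D ≠ ∞) {k : ℤ} {E : Set Y} (hE : IsCylinderPorous N cyl k E) : ν E = 0 := by
  have hq : 1 - D⁻¹ < 1 := ENNReal.sub_lt_self one_ne_top one_ne_zero (ENNReal.inv_ne_zero.mpr hD)
  have hcell : ∀ j ∈ N k, ν (E ∩ cyl k j) = 0 := fun j hj =>
    ENNReal.eq_zero_of_le_mul_pow hq fun t => by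
      rw [ENNReal.coe_toNNReal (hfin k j hj)]
      exact hP.measure_inter_le_mul_pow hmeas hfin hdoub hE t k le_rfl j hj
  refine measure_mono_null (fun σ hσ => ?_)
    ((measure_biUnion_null_iff (N k).to_countable).mpr hcell)
  obtain ⟨j, hj, hσj⟩ := hP.exists_mem k σ
  exact mem_biUnion hj ⟨hσ, hσj⟩

end IsNestedPartition

section BallCylinders

variable {Y : Type*} [MetricSpace Y] {N : ℤ → Set ℕ} {cyl : ℤ → ℕ → Set Y}

lemma isNestedPartition_of_eq_closedBall (hcover : ∀ k : ℤ, ⋃ i ∈ N k, cyl k i = univ)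
    (hdisj : ∀ k : ℤ, ∀ i ∈ N k, ∀ j ∈ N k, i ≠ j → cyl k i ∩ cyl k j = ∅)
    (hballs : ∀ k : ℤ, ∀ i ∈ N k, ∀ σ ∈ cyl k i, cyl k i = closedBall σ ((2 : ℝ) ^ (-(k + 1)))) :
    IsNestedPartition N cyl where
  iUnion_eq_univ := hcover
  pairwiseDisjoint m i hi j hj hij := disjoint_iff_inter_eq_empty.mpr (hdisj m i hi j hj hij)
  subset_of_mem m j hj l hl σ hσl hσj := by
    rw [hballs m j hj σ hσj, hballs (m + 1) l hl σ hσl]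
    exact closedBall_subset_closedBall (zpow_le_zpow_right₀ one_le_two (by omega))

lemma isClosed_of_forall_eq_closedBall {s : Set Y} {ρ : ℝ} (h : ∀ σ ∈ s, s = closedBall σ ρ) :
    IsClosed s := by
  rcases s.eq_empty_or_nonempty with rfl | ⟨σ, hσ⟩
  · exact isClosed_empty
  · exact h σ hσ ▸ isClosed_closedBall

variable [MeasurableSpace Y] {ν : Measure Y}

lemma measure_ne_top_of_forall_eq_closedBall
    (hfin : ∀ (y : Y) (ρ : ℝ), 0 < ρ → ν (closedBall y ρ) < ⊤) {s : Set Y} {ρ : ℝ} (hρ : 0 < ρ)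
    (h : ∀ σ ∈ s, s = closedBall σ ρ) : ν s ≠ ∞ := by
  rcases s.eq_empty_or_nonempty with rfl | ⟨σ, hσ⟩
  · exact measure_empty (μ := ν) ▸ zero_ne_top
  · exact h σ hσ ▸ (hfin σ ρ hρ).ne

lemma measure_le_mul_measure_child
    (hballs : ∀ k : ℤ, ∀ i ∈ N k, ∀ σ ∈ cyl k i, cyl k i = closedBall σ ((2 : ℝ) ^ (-(k + 1))))
    {D : ℝ≥0∞}
    (hdoub : ∀ (y : Y) (ρ : ℝ), 0 < ρ → ν (closedBall y (2 * ρ)) ≤ D * ν (closedBall y ρ))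
    {m : ℤ} {j l : ℕ} (hj : j ∈ N m) (hl : l ∈ N (m + 1)) (hne : (cyl (m + 1) l).Nonempty)
    (hsub : cyl (m + 1) l ⊆ cyl m j) : ν (cyl m j) ≤ D * ν (cyl (m + 1) l) := by
  obtain ⟨τ, hτ⟩ := hne
  have hrad : (2 : ℝ) ^ (-(m + 1)) = 2 * 2 ^ (-(m + 1 + 1)) := by
    rw [← zpow_one_add₀ two_ne_zero]
    congr 1
    ring
  rw [hballs m j hj τ (hsub hτ), hballs (m + 1) l hl τ hτ, hrad]
  exact hdoub τ _ (by positivity)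

end BallCylinders

lemma disjoint_frontier_of_subset_or_disjoint {X : Type*} [TopologicalSpace X] {U s : Set X}
    (hU : IsOpen U) (h : U ⊆ s ∨ Disjoint U s) : Disjoint U (frontier s) := by
  rcases h with h | h
  · exact disjoint_interior_frontier.mono_left (interior_maximal h hU)
  · exact (h.closure_right hU).mono_right frontier_subset_closure

lemma isCylinderPorous_preimage_frontier {X Y : Type*} [MetricSpace X] {r c C : ℝ}
    (hr0 : 0 < r) (hCr : C * r < c) {N : ℤ → Set ℕ} {Q : ℤ → ℕ → Set X} {xc : ℤ → ℕ → X}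
    (hQnest : ∀ (k m : ℤ), m ≤ k → ∀ i ∈ N k, ∀ j ∈ N m, Q k i ∩ Q m j = ∅ ∨ Q k i ⊆ Q m j)
    (hQball : ∀ (k : ℤ), ∀ i ∈ N k,
      ball (xc k i) (c * r ^ k) ⊆ Q k i ∧ Q k i ⊆ closedBall (xc k i) (C * r ^ k))
    (hQctr : ∀ (k : ℤ), ∀ i ∈ N k, ∃ l ∈ N (k + 1), xc (k + 1) l = xc k i ∧ Q (k + 1) l ⊆ Q k i)
    {cyl : ℤ → ℕ → Set Y}
    (hmatch : ∀ (k : ℤ), ∀ j ∈ N (k + 1), ∀ i ∈ N k, Q (k + 1) j ⊆ Q k i → cyl (k + 1) j ⊆ cyl k i)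
    {π : Y → X} (hproj : ∀ (k : ℤ), ∀ i ∈ N k, π '' cyl k i = closure (Q k i))
    {k : ℤ} {i : ℕ} (hi : i ∈ N k) : IsCylinderPorous N cyl k (π ⁻¹' frontier (Q k i)) := by
  intro m hkm j hj
  obtain ⟨l, hl, hxl, hQl⟩ := hQctr m j hj
  refine ⟨l, hl, hmatch m l hl j hj hQl, ?_⟩
  have hball : Disjoint (ball (xc m j) (c * r ^ m)) (frontier (Q k i)) := by
    refine disjoint_frontier_of_subset_or_disjoint isOpen_ball ?_
    rcases hQnest m k hkm j hj i hi with h | h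
    · exact .inr ((disjoint_iff_inter_eq_empty.mpr h).mono_left (hQball m j hj).1)
    · exact .inl ((hQball m j hj).1.trans h)
  have hchild : closure (Q (m + 1) l) ⊆ ball (xc m j) (c * r ^ m) := by
    refine (closure_minimal (hxl ▸ (hQball (m + 1) l hl).2) isClosed_closedBall).trans
      (closedBall_subset_ball ?_)
    rw [zpow_add_one₀ hr0.ne', ← mul_assoc, mul_right_comm]
    exact mul_lt_mul_of_pos_right hCr (zpow_pos hr0 m)
  rw [← disjoint_image_left, hproj (m + 1) l hl]
  exact hball.mono_left hchild

lemma map_apply_eq_of_frontier_null {X Y : Type*} [TopologicalSpace X] [MeasurableSpace X]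
    [OpensMeasurableSpace X] [MeasurableSpace Y] {ν : Measure Y} {π : Y → X} (hπ : Measurable π)
    {s : Set X} {A : Set Y} (hfr : ν.map π (frontier s) = 0) (himage : π '' A = closure s)
    (hpre : π ⁻¹' interior s ⊆ A) : ν.map π s = ν A := by
  apply le_antisymm
  · calc ν.map π s = ν.map π (interior s) := (measure_interior_of_null_frontier hfr).symm
      _ = ν (π ⁻¹' interior s) := Measure.map_apply hπ isOpen_interior.measurableSet
      _ ≤ ν A := measure_mono hpre
  · calc ν A ≤ ν (π ⁻¹' closure s) := measure_mono (himage ▸ subset_preimage_image π A)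
      _ = ν.map π (closure s) := (Measure.map_apply hπ isClosed_closure.measurableSet).symm
      _ = ν.map π s := measure_closure_of_null_frontier hfr

theorem pushforward_boundary_null_general {X Y : Type*} [MetricSpace X]
    [MeasurableSpace X] [BorelSpace X] [MetricSpace Y] [MeasurableSpace Y] [BorelSpace Y]
    (r c C : ℝ) (hr0 : 0 < r) (hr : r ≤ 1 / 7)
    (hc : c = 1 / 2 - r / (1 - r)) (hC : C = 1 / (1 - r))
    (N : ℤ → Set ℕ) (Q : ℤ → ℕ → Set X) (xc : ℤ → ℕ → X)
    (hQnest : ∀ (k m : ℤ), m ≤ k → ∀ i ∈ N k, ∀ j ∈ N m,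
      Q k i ∩ Q m j = ∅ ∨ Q k i ⊆ Q m j)
    (hQball : ∀ (k : ℤ), ∀ i ∈ N k,
      Metric.ball (xc k i) (c * r ^ k) ⊆ Q k i ∧
      Q k i ⊆ Metric.closedBall (xc k i) (C * r ^ k))
    (hQctr : ∀ (k : ℤ), ∀ i ∈ N k, ∃ l ∈ N (k + 1),
      xc (k + 1) l = xc k i ∧ Q (k + 1) l ⊆ Q k i)
    (cyl : ℤ → ℕ → Set Y)
    (hcover : ∀ k : ℤ, ⋃ i ∈ N k, cyl k i = Set.univ)
    (hdisj : ∀ (k : ℤ), ∀ i ∈ N k, ∀ j ∈ N k, i ≠ j → cyl k i ∩ cyl k j = ∅)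
    (hballs : ∀ (k : ℤ), ∀ i ∈ N k, ∀ σ ∈ cyl k i,
      cyl k i = Metric.closedBall σ ((2 : ℝ) ^ (-(k + 1))))
    (hmatch : ∀ (k : ℤ), ∀ j ∈ N (k + 1), ∀ i ∈ N k,
      (cyl (k + 1) j ⊆ cyl k i ↔ Q (k + 1) j ⊆ Q k i))
    (π : Y → X) (hπ : Continuous π)
    (hproj : ∀ (k : ℤ), ∀ i ∈ N k, π '' cyl k i = closure (Q k i))
    (hpre : ∀ (k : ℤ), ∀ i ∈ N k, π ⁻¹' interior (Q k i) ⊆ cyl k i)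
    (ν : Measure Y) (D : ℝ≥0∞) (hD : D < ⊤)
    (hνdoub : ∀ (y : Y) (ρ : ℝ), 0 < ρ →
      0 < ν (Metric.closedBall y ρ) ∧
      ν (Metric.closedBall y (2 * ρ)) ≤ D * ν (Metric.closedBall y ρ) ∧
      ν (Metric.closedBall y ρ) < ⊤) :
    ∀ (k : ℤ), ∀ i ∈ N k,
      (Measure.map π ν) (frontier (Q k i)) = 0 ∧
      (Measure.map π ν) (Q k i) = ν (cyl k i) := by
  intro k i hi
  have hCr : C * r < c := hC ▸ hc ▸ one_div_one_sub_mul_lt hr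
  have hc0 : 0 < c := (mul_pos (hC ▸ one_div_pos.mpr (by linarith)) hr0).trans hCr
  have hcylne : ∀ m, ∀ j ∈ N m, (cyl m j).Nonempty := fun m j hj =>
    (hproj m j hj ▸ (nonempty_of_mem ((hQball m j hj).1
      (mem_ball_self (by positivity)))).closure).of_image
  have hnull : ν (π ⁻¹' frontier (Q k i)) = 0 :=
    (isNestedPartition_of_eq_closedBall hcover hdisj hballs).measure_eq_zero_of_isCylinderPorous
      (fun m j hj => (isClosed_of_forall_eq_closedBall (hballs m j hj)).measurableSet)
      (fun m j hj => measure_ne_top_of_forall_eq_closedBall (fun y ρ hρ => (hνdoub y ρ hρ).2.2)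
        (by positivity) (hballs m j hj))
      (fun m j hj l hl => measure_le_mul_measure_child hballs (fun y ρ hρ => (hνdoub y ρ hρ).2.1)
        hj hl (hcylne (m + 1) l hl))
      hD.ne
      (isCylinderPorous_preimage_frontier hr0 hCr hQnest hQball hQctr
        (fun m j hj i hi => (hmatch m j hj i hi).mpr) hproj hi)
  have hfr : Measure.map π ν (frontier (Q k i)) = 0 := by
    rwa [Measure.map_apply hπ.measurable isClosed_frontier.measurableSet]
  exact ⟨hfr, map_apply_eq_of_frontier_null hπ.measurable hfr (hproj k i hi) (hpre k i hi)⟩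

/-- Let `X` be a complete doubling metric space with generalised dyadic cubes `Q k i`
(`0 < r ≤ 1/7`), let `Y` be the code space of nested chains (an ultrametric space whose
cylinders `cyl k i` are clopen balls forming nested partitions matching the cubes), let
`π : Y → X` be the projection with `π '' cyl k i = closure (Q k i)`, and let `ν` be a
doubling measure on `Y` whose cylinder masses follow the construction. Then the
pushforward `μ = π_* ν` gives zero mass to every cube boundary, and consequently
`μ (Q k i) = ν (cyl k i)`. -/
theorem pushforward_boundary_null {X Y : Type*} [MetricSpace X] [CompleteSpace X]
    [MeasurableSpace X] [BorelSpace X] [MetricSpace Y] [MeasurableSpace Y] [BorelSpace Y]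
    (r c C : ℝ) (hr0 : 0 < r) (hr : r ≤ 1 / 7)
    (hc : c = 1 / 2 - r / (1 - r)) (hC : C = 1 / (1 - r))
    (N : ℤ → Set ℕ) (Q : ℤ → ℕ → Set X) (xc : ℤ → ℕ → X)
    (hQcover : ∀ k : ℤ, ⋃ i ∈ N k, Q k i = Set.univ)
    (hQnest : ∀ (k m : ℤ), m ≤ k → ∀ i ∈ N k, ∀ j ∈ N m,
      Q k i ∩ Q m j = ∅ ∨ Q k i ⊆ Q m j)
    (hQball : ∀ (k : ℤ), ∀ i ∈ N k,
      Metric.ball (xc k i) (c * r ^ k) ⊆ Q k i ∧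
      Q k i ⊆ Metric.closedBall (xc k i) (C * r ^ k))
    (hQctr : ∀ (k : ℤ), ∀ i ∈ N k, ∃ l ∈ N (k + 1),
      xc (k + 1) l = xc k i ∧ Q (k + 1) l ⊆ Q k i)
    (cyl : ℤ → ℕ → Set Y)
    (hcover : ∀ k : ℤ, ⋃ i ∈ N k, cyl k i = Set.univ)
    (hdisj : ∀ (k : ℤ), ∀ i ∈ N k, ∀ j ∈ N k, i ≠ j → cyl k i ∩ cyl k j = ∅)
    (hballs : ∀ (k : ℤ), ∀ i ∈ N k, ∀ σ ∈ cyl k i,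
      cyl k i = Metric.closedBall σ ((2 : ℝ) ^ (-(k + 1))))
    (hmatch : ∀ (k : ℤ), ∀ j ∈ N (k + 1), ∀ i ∈ N k,
      (cyl (k + 1) j ⊆ cyl k i ↔ Q (k + 1) j ⊆ Q k i))
    (π : Y → X) (hπ : Continuous π)
    (hproj : ∀ (k : ℤ), ∀ i ∈ N k, π '' cyl k i = closure (Q k i))
    (hpre : ∀ (k : ℤ), ∀ i ∈ N k, π ⁻¹' interior (Q k i) ⊆ cyl k i)
    (ν : Measure Y) (D : ℝ≥0∞) (hD : D < ⊤)
    (hνdoub : ∀ (y : Y) (ρ : ℝ), 0 < ρ →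
      0 < ν (Metric.closedBall y ρ) ∧
      ν (Metric.closedBall y (2 * ρ)) ≤ D * ν (Metric.closedBall y ρ) ∧
      ν (Metric.closedBall y ρ) < ⊤) :
    ∀ (k : ℤ), ∀ i ∈ N k,
      (Measure.map π ν) (frontier (Q k i)) = 0 ∧
      (Measure.map π ν) (Q k i) = ν (cyl k i) :=
  pushforward_boundary_null_general r c C hr0 hr hc hC N Q xc hQnest hQball hQctr cyl hcover hdisj
    hballs hmatch π hπ hproj hpre ν D hD hνdoub
end

section
/- Let X be a doubling metric space with generalised dyadic cubes {Q_{k,i}} at scales r^k (r ≤ 1/7) and let μ be the doubling measure constructed via the cylinder recursion with parameter 0 < p < 1/(M+1). If Q_{k,i} and Q_{k,j} are two cubes at the same level k with d(x_{k,i}, x_{k,j}) < r^{k−3}, then μ(Q_{k,j}) ≤ p^{−4} μ(Q_{k,i}). -/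
/-!
The ancestors of `Q k i` are the cubes containing its centre. Follow the ancestor chains of
`Q k i` and `Q k j` upward until they meet. While they still differ at a level `n ≤ k - 4`, the
`j`-chain cannot pass to the centre-preserving child at level `n + 1`: the inner ball of its
parent would then contain the centre of `Q k i`, which lies in another cube of level `n`. So going
down the `j`-chain picks up exactly the factor `p`, while the `i`-chain picks up at least `p`. The
ratio of the two measures can therefore grow only at the level where the chains split and at the
last three levels, each time by at most `p⁻¹`.
-/

open Metric Set MeasureTheory ENNReal Classical
noncomputable section

theorem le_inv_pow_mul_of_merge {p : ℝ≥0∞} (hp0 : p ≠ 0) (hp1 : p ≤ 1)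
    {a b : ℤ → ℝ≥0∞} {merged : ℤ → Prop} (k : ℤ) (s : ℕ)
    (ha : ∀ n, p * a n ≤ a (n + 1)) (hb : ∀ n, b (n + 1) ≤ b n)
    (hmerged : ∀ n, merged n → b n = a n)
    (hsplit : ∀ n, n + s < k → ¬ merged n → b (n + 1) = p * b n)
    {m : ℤ} (hm : merged m) (hmk : m ≤ k) :
    b k ≤ p⁻¹ ^ (s + 1) * a k := by
  have hinv : (1 : ℝ≥0∞) ≤ p⁻¹ := ENNReal.one_le_inv.2 hp1
  have ha' : ∀ n, a n ≤ p⁻¹ * a (n + 1) := fun n =>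
    calc a n = p⁻¹ * (p * a n) := by
          rw [← mul_assoc, ENNReal.inv_mul_cancel hp0 (ne_top_of_le_ne_top one_ne_top hp1),
            one_mul]
      _ ≤ p⁻¹ * a (n + 1) := by gcongr; exact ha n
  -- Below level `k - s` the ratio `b / a` cannot grow; above it, it grows by at most `p⁻¹`.
  suffices key : ∀ n, m ≤ n → b n ≤ p⁻¹ ^ (1 + (n + s - k).toNat) * a n by
    simpa [add_comm] using key k hmk
  intro n hmn
  induction n, hmn using Int.leInduction with
  | base => rw [hmerged m hm]; exact le_mul_of_one_le_left' (one_le_pow₀ hinv)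
  | succ n hmn ih =>
    by_cases hn : merged n
    · calc b (n + 1) ≤ b n := hb n
        _ = a n := hmerged n hn
        _ ≤ p⁻¹ * a (n + 1) := ha' n
        _ ≤ p⁻¹ ^ (1 + (n + 1 + s - k).toNat) * a (n + 1) := by
          gcongr; exact le_self_pow₀ hinv (by omega)
    by_cases hlow : n + s < k
    · have he : (n + s - k).toNat = 0 := by omega
      rw [he, add_zero, pow_one] at ih
      calc b (n + 1) = p * b n := hsplit n hlow hn
        _ ≤ p * (p⁻¹ * a n) := by gcongr
        _ = a n := by
          rw [← mul_assoc, ENNReal.mul_inv_cancel hp0 (ne_top_of_le_ne_top one_ne_top hp1),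
            one_mul]
        _ ≤ p⁻¹ * a (n + 1) := ha' n
        _ ≤ p⁻¹ ^ (1 + (n + 1 + s - k).toNat) * a (n + 1) := by
          gcongr; exact le_self_pow₀ hinv (by omega)
    · have he : 1 + (n + 1 + s - k).toNat = 1 + (n + s - k).toNat + 1 := by omega
      calc b (n + 1) ≤ b n := hb n
        _ ≤ p⁻¹ ^ (1 + (n + s - k).toNat) * a n := ih
        _ ≤ p⁻¹ ^ (1 + (n + s - k).toNat) * (p⁻¹ * a (n + 1)) := by gcongr; exact ha' n
        _ = p⁻¹ ^ (1 + (n + 1 + s - k).toNat) * a (n + 1) := by rw [he, pow_succ, mul_assoc]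

theorem le_one_sub_natCast_mul {p : ℝ≥0∞} {m M : ℕ} (hm : m ≤ M)
    (hp : p < 1 / ((M : ℝ≥0∞) + 1)) : p ≤ 1 - m * p := by
  have hMp : ((M : ℝ≥0∞) + 1) * p < 1 := mul_lt_of_lt_div' hp
  refine le_sub_of_add_le_left (mul_ne_top (natCast_ne_top m) (hp.trans_le le_top).ne) ?_
  calc (m : ℝ≥0∞) * p + p = ((m : ℝ≥0∞) + 1) * p := by ring
    _ ≤ ((M : ℝ≥0∞) + 1) * p := by gcongr
    _ ≤ 1 := hMp.le

theorem radius_gap {r : ℝ} (hr0 : 0 < r) (hr : r ≤ 1 / 7) {n k : ℤ} (hn : n ≤ k - 4) :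
    1 / (1 - r) * r ^ (n + 1) + r ^ (k - 3) < (1 / 2 - r / (1 - r)) * r ^ n := by
  have h1r : 0 < 1 - r := by linarith
  have hCr : r / (1 - r) ≤ 1 / 6 := by rw [div_le_div_iff₀ h1r (by norm_num)]; linarith
  have hpow : r ^ (k - 4) ≤ r ^ n := zpow_le_zpow_right_of_le_one₀ hr0 (by linarith) hn
  have hn0 : 0 < r ^ n := zpow_pos hr0 n
  have hk : r ^ (k - 3) = r ^ (k - 4) * r := by rw [← zpow_add_one₀ hr0.ne']; ring_nf
  have hC : 1 / (1 - r) * r ^ (n + 1) = r / (1 - r) * r ^ n := by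
    rw [zpow_add_one₀ hr0.ne']; ring
  rw [hk, hC]
  nlinarith [mul_le_mul_of_nonneg_right hpow hr0.le, mul_le_mul_of_nonneg_right hCr hn0.le]

section Cubes

variable {X : Type*} {N : ℤ → Set ℕ} {Q : ℤ → ℕ → Set X}

def cubeIndex (N : ℤ → Set ℕ) (Q : ℤ → ℕ → Set X) (n : ℤ) (x : X) : ℕ :=
  Classical.epsilon fun l => l ∈ N n ∧ x ∈ Q n l

theorem cubeIndex_spec (hcover : ∀ k : ℤ, ⋃ i ∈ N k, Q k i = univ) (n : ℤ) (x : X) :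
    cubeIndex N Q n x ∈ N n ∧ x ∈ Q n (cubeIndex N Q n x) :=
  Classical.epsilon_spec (by simpa using (hcover n).ge (mem_univ x))

theorem eq_of_mem_cube (hdisj : ∀ k : ℤ, ∀ i ∈ N k, ∀ j ∈ N k, i ≠ j → Q k i ∩ Q k j = ∅)
    {n : ℤ} {i j : ℕ} {x : X} (hi : i ∈ N n) (hj : j ∈ N n) (hxi : x ∈ Q n i)
    (hxj : x ∈ Q n j) : i = j := by
  by_contra h
  have hx : x ∈ Q n i ∩ Q n j := ⟨hxi, hxj⟩
  rw [hdisj n i hi j hj h] at hx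
  exact hx

theorem cubeIndex_eq (hcover : ∀ k : ℤ, ⋃ i ∈ N k, Q k i = univ)
    (hdisj : ∀ k : ℤ, ∀ i ∈ N k, ∀ j ∈ N k, i ≠ j → Q k i ∩ Q k j = ∅)
    {n : ℤ} {l : ℕ} {x : X} (hl : l ∈ N n) (hx : x ∈ Q n l) : cubeIndex N Q n x = l :=
  eq_of_mem_cube hdisj (cubeIndex_spec hcover n x).1 hl (cubeIndex_spec hcover n x).2 hx

theorem cubeIndex_succ_subset (hcover : ∀ k : ℤ, ⋃ i ∈ N k, Q k i = univ)
    (hnest : ∀ k m : ℤ, m ≤ k → ∀ i ∈ N k, ∀ j ∈ N m, Q k i ∩ Q m j = ∅ ∨ Q k i ⊆ Q m j)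
    (n : ℤ) (x : X) : Q (n + 1) (cubeIndex N Q (n + 1) x) ⊆ Q n (cubeIndex N Q n x) := by
  obtain ⟨hN, hx⟩ := cubeIndex_spec hcover (n + 1) x
  obtain ⟨hN', hx'⟩ := cubeIndex_spec hcover n x
  refine (hnest (n + 1) n (by omega) _ hN _ hN').resolve_left fun h => ?_
  exact (h ▸ ⟨hx, hx'⟩ : x ∈ (∅ : Set X))

section Metric

variable [MetricSpace X] {xc : ℤ → ℕ → X} {r c C : ℝ}

theorem center_mem_cube {k : ℤ} {i : ℕ} (hball : ball (xc k i) (c * r ^ k) ⊆ Q k i)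
    (hc : 0 < c) (hr : 0 < r) : xc k i ∈ Q k i :=
  hball (mem_ball_self (by positivity))

theorem center_succ_ne_of_cubeIndex_ne (hcover : ∀ k : ℤ, ⋃ i ∈ N k, Q k i = univ)
    (hdisj : ∀ k : ℤ, ∀ i ∈ N k, ∀ j ∈ N k, i ≠ j → Q k i ∩ Q k j = ∅)
    (hball : ∀ k : ℤ, ∀ i ∈ N k, ball (xc k i) (c * r ^ k) ⊆ Q k i ∧
      Q k i ⊆ closedBall (xc k i) (C * r ^ k))
    {n : ℤ} {x y : X} (hgap : C * r ^ (n + 1) + dist x y < c * r ^ n)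
    (hne : cubeIndex N Q n x ≠ cubeIndex N Q n y) :
    xc (n + 1) (cubeIndex N Q (n + 1) y) ≠ xc n (cubeIndex N Q n y) := by
  intro hcenter
  obtain ⟨hN, hy⟩ := cubeIndex_spec hcover (n + 1) y
  have hy' : dist y (xc n (cubeIndex N Q n y)) ≤ C * r ^ (n + 1) := by
    rw [← hcenter]; exact (hball _ _ hN).2 hy
  have hx : x ∈ Q n (cubeIndex N Q n y) := by
    refine (hball n _ (cubeIndex_spec hcover n y).1).1 (mem_ball.2 ?_)
    linarith [dist_triangle x y (xc n (cubeIndex N Q n y))]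
  exact hne (cubeIndex_eq hcover hdisj (cubeIndex_spec hcover n y).1 hx)

end Metric

section Measure

variable [MeasurableSpace X] {μ : Measure X} {xc : ℤ → ℕ → X} {Mf : ℤ → ℕ → ℕ} {p : ℝ≥0∞}

theorem mul_measure_cubeIndex_le_succ (hcover : ∀ k : ℤ, ⋃ i ∈ N k, Q k i = univ)
    (hnest : ∀ k m : ℤ, m ≤ k → ∀ i ∈ N k, ∀ j ∈ N m, Q k i ∩ Q m j = ∅ ∨ Q k i ⊆ Q m j)
    {M : ℕ} (hM : ∀ k i, Mf k i ≤ M) (hp : p < 1 / ((M : ℝ≥0∞) + 1))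
    (hrec : ∀ k : ℤ, ∀ i ∈ N k, ∀ j ∈ N (k + 1), Q (k + 1) j ⊆ Q k i →
      μ (Q (k + 1) j) = if xc (k + 1) j = xc k i then (1 - (Mf k i : ℝ≥0∞) * p) * μ (Q k i)
        else p * μ (Q k i))
    (n : ℤ) (x : X) :
    p * μ (Q n (cubeIndex N Q n x)) ≤ μ (Q (n + 1) (cubeIndex N Q (n + 1) x)) := by
  rw [hrec n _ (cubeIndex_spec hcover n x).1 _ (cubeIndex_spec hcover (n + 1) x).1
    (cubeIndex_succ_subset hcover hnest n x)]
  split_ifs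
  · gcongr; exact le_one_sub_natCast_mul (hM _ _) hp
  · rfl

theorem measure_cubeIndex_succ_of_center_ne (hcover : ∀ k : ℤ, ⋃ i ∈ N k, Q k i = univ)
    (hnest : ∀ k m : ℤ, m ≤ k → ∀ i ∈ N k, ∀ j ∈ N m, Q k i ∩ Q m j = ∅ ∨ Q k i ⊆ Q m j)
    (hrec : ∀ k : ℤ, ∀ i ∈ N k, ∀ j ∈ N (k + 1), Q (k + 1) j ⊆ Q k i →
      μ (Q (k + 1) j) = if xc (k + 1) j = xc k i then (1 - (Mf k i : ℝ≥0∞) * p) * μ (Q k i)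
        else p * μ (Q k i))
    {n : ℤ} {x : X} (h : xc (n + 1) (cubeIndex N Q (n + 1) x) ≠ xc n (cubeIndex N Q n x)) :
    μ (Q (n + 1) (cubeIndex N Q (n + 1) x)) = p * μ (Q n (cubeIndex N Q n x)) := by
  rw [hrec n _ (cubeIndex_spec hcover n x).1 _ (cubeIndex_spec hcover (n + 1) x).1
    (cubeIndex_succ_subset hcover hnest n x), if_neg h]

end Measure

end Cubes

theorem nearby_cubes_comparable_general {X : Type*} [MetricSpace X] [MeasurableSpace X]
    (r c C : ℝ) (hr0 : 0 < r) (hr : r ≤ 1 / 7)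
    (hc : c = 1 / 2 - r / (1 - r)) (hC : C = 1 / (1 - r))
    (N : ℤ → Set ℕ) (Q : ℤ → ℕ → Set X) (xc : ℤ → ℕ → X)
    (hcover : ∀ k : ℤ, ⋃ i ∈ N k, Q k i = Set.univ)
    (hnest : ∀ (k m : ℤ), m ≤ k → ∀ i ∈ N k, ∀ j ∈ N m,
      Q k i ∩ Q m j = ∅ ∨ Q k i ⊆ Q m j)
    (hdisj : ∀ (k : ℤ), ∀ i ∈ N k, ∀ j ∈ N k, i ≠ j → Q k i ∩ Q k j = ∅)
    (hball : ∀ (k : ℤ), ∀ i ∈ N k,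
      Metric.ball (xc k i) (c * r ^ k) ⊆ Q k i ∧
      Q k i ⊆ Metric.closedBall (xc k i) (C * r ^ k))
    (hanc : ∀ (k : ℤ), ∀ i ∈ N k, ∀ j ∈ N k, ∃ m : ℤ, m ≤ k ∧
      ∃ l ∈ N m, Q k i ⊆ Q m l ∧ Q k j ⊆ Q m l)
    (M : ℕ) (Mf : ℤ → ℕ → ℕ) (hM : ∀ (k : ℤ) (i : ℕ), Mf k i ≤ M)
    (p : ℝ≥0∞) (hp0 : 0 < p) (hp1 : p < 1 / ((M : ℝ≥0∞) + 1))
    (μ : Measure X)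
    (hrec : ∀ (k : ℤ), ∀ i ∈ N k, ∀ j ∈ N (k + 1), Q (k + 1) j ⊆ Q k i →
      μ (Q (k + 1) j) = if xc (k + 1) j = xc k i then (1 - (Mf k i : ℝ≥0∞) * p) * μ (Q k i)
        else p * μ (Q k i)) :
    ∀ (k : ℤ), ∀ i ∈ N k, ∀ j ∈ N k,
      dist (xc k i) (xc k j) < r ^ (k - 3) →
      μ (Q k j) ≤ p⁻¹ ^ 4 * μ (Q k i) := by
  intro k i hi j hj hdist
  subst hc hC
  have hc0 : 0 < 1 / 2 - r / (1 - r) := by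
    have : r / (1 - r) < 1 / 2 := by rw [div_lt_div_iff₀ (by linarith) (by norm_num)]; linarith
    linarith
  have hp : p ≤ 1 := (le_one_sub_natCast_mul M.zero_le hp1).trans (by simp)
  have hx := center_mem_cube (hball k i hi).1 hc0 hr0
  have hy := center_mem_cube (hball k j hj).1 hc0 hr0
  obtain ⟨m, hmk, l, hl, hil, hjl⟩ := hanc k i hi j hj
  have key := le_inv_pow_mul_of_merge (s := 3) hp0.ne' hp k
    (mul_measure_cubeIndex_le_succ hcover hnest hM hp1 hrec · (xc k i))
    (fun n => measure_mono (cubeIndex_succ_subset hcover hnest n (xc k j)))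
    (fun n (h : cubeIndex N Q n (xc k i) = cubeIndex N Q n (xc k j)) => by rw [h])
    (fun n hn hne => measure_cubeIndex_succ_of_center_ne hcover hnest hrec
      (center_succ_ne_of_cubeIndex_ne hcover hdisj hball
        (by linarith [radius_gap hr0 hr (show n ≤ k - 4 by omega), dist_comm (xc k i) (xc k j)])
        hne))
    ((cubeIndex_eq hcover hdisj hl (hil hx)).trans (cubeIndex_eq hcover hdisj hl (hjl hy)).symm)
    hmk
  rwa [cubeIndex_eq hcover hdisj hi hx, cubeIndex_eq hcover hdisj hj hy] at key

/-- For the doubling measure `μ` built on generalised dyadic cubes (`0 < r ≤ 1/7`) via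
the cylinder recursion with parameter `0 < p < 1/(M+1)`: if two cubes `Q k i`, `Q k j`
at the same level have nearby centres, `dist (xc k i) (xc k j) < r^{k-3}`, then
`μ (Q k j) ≤ p⁻¹^4 · μ (Q k i)`. -/
theorem nearby_cubes_comparable {X : Type*} [MetricSpace X] [MeasurableSpace X]
    [BorelSpace X]
    (r c C : ℝ) (hr0 : 0 < r) (hr : r ≤ 1 / 7)
    (hc : c = 1 / 2 - r / (1 - r)) (hC : C = 1 / (1 - r))
    (N : ℤ → Set ℕ) (Q : ℤ → ℕ → Set X) (xc : ℤ → ℕ → X)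
    (hcover : ∀ k : ℤ, ⋃ i ∈ N k, Q k i = Set.univ)
    (hnest : ∀ (k m : ℤ), m ≤ k → ∀ i ∈ N k, ∀ j ∈ N m,
      Q k i ∩ Q m j = ∅ ∨ Q k i ⊆ Q m j)
    (hdisj : ∀ (k : ℤ), ∀ i ∈ N k, ∀ j ∈ N k, i ≠ j → Q k i ∩ Q k j = ∅)
    (hball : ∀ (k : ℤ), ∀ i ∈ N k,
      Metric.ball (xc k i) (c * r ^ k) ⊆ Q k i ∧
      Q k i ⊆ Metric.closedBall (xc k i) (C * r ^ k))
    (hparent : ∀ (k : ℤ), ∀ i ∈ N k, ∃ j ∈ N (k - 1), Q k i ⊆ Q (k - 1) j)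
    (hanc : ∀ (k : ℤ), ∀ i ∈ N k, ∀ j ∈ N k, ∃ m : ℤ, m ≤ k ∧
      ∃ l ∈ N m, Q k i ⊆ Q m l ∧ Q k j ⊆ Q m l)
    (M : ℕ) (Mf : ℤ → ℕ → ℕ) (hM : ∀ (k : ℤ) (i : ℕ), Mf k i ≤ M)
    (p : ℝ≥0∞) (hp0 : 0 < p) (hp1 : p < 1 / ((M : ℝ≥0∞) + 1))
    (μ : Measure X)
    (hrec : ∀ (k : ℤ), ∀ i ∈ N k, ∀ j ∈ N (k + 1), Q (k + 1) j ⊆ Q k i →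
      μ (Q (k + 1) j) = if xc (k + 1) j = xc k i then (1 - (Mf k i : ℝ≥0∞) * p) * μ (Q k i)
        else p * μ (Q k i)) :
    ∀ (k : ℤ), ∀ i ∈ N k, ∀ j ∈ N k,
      dist (xc k i) (xc k j) < r ^ (k - 3) →
      μ (Q k j) ≤ p⁻¹ ^ 4 * μ (Q k i) :=
  nearby_cubes_comparable_general r c C hr0 hr hc hC N Q xc hcover hnest hdisj hball hanc M Mf hM p
    hp0 hp1 μ hrec
end
end

section
/- Let μ be a measure on a doubling metric space whose generalised-dyadic-cube masses satisfy the recursion: each cube Q_{k,i} has M_{k,i} + 1 ≤ M + 1 children, the off-center children each get mass p μ(Q_{k,i}) and the center child gets (1 − M_{k,i} p) μ(Q_{k,i}), with 0 < p ≤ 1/(M+1). Then for every 0 < q < 1, every cube Q_{k,i}, and every n ≥ 1, the sum of μ(Q)^q over all level-(k+n) subcubes Q of Q_{k,i} is at most μ(Q_{k,i})^q · (M p^q + (1 − M p)^q)^n. -/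
/-!
Every nonempty level-`(m + 1)` subcube of `Q k i` lies in a level-`m` subcube of `Q k i`, so the
sum over level `m + 1` is bounded by summing, over the level-`m` subcubes, the sums over their
children. For a single cube `Q` with `c ≤ M` off-centre children, the children contribute
`(c p^q + (1 - c p)^q) μ(Q)^q`, and by subadditivity of `t ↦ t^q` this grows with `c`, hence is
at most `(M p^q + (1 - M p)^q) μ(Q)^q`. Induction on the level gives the bound.
-/

open Metric Set MeasureTheory ENNReal Classical
noncomputable section

lemma ENNReal.monotone_natCast_mul_rpow_add_tsub_mul_rpow (a p : ℝ≥0∞) {q : ℝ}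
    (hq0 : 0 ≤ q) (hq1 : q ≤ 1) :
    Monotone fun m : ℕ => (m : ℝ≥0∞) * p ^ q + (a - m * p) ^ q := by
  refine monotone_nat_of_le_succ fun m => ?_
  have hsplit : a - m * p ≤ (a - (m + 1 : ℕ) * p) + p := by
    rw [tsub_le_iff_right, add_assoc, add_comm p, ← add_one_mul, ← Nat.cast_add_one]
    exact le_tsub_add
  calc (m : ℝ≥0∞) * p ^ q + (a - m * p) ^ q
      ≤ m * p ^ q + ((a - (m + 1 : ℕ) * p) ^ q + p ^ q) := by
        gcongr
        exact (rpow_le_rpow hsplit hq0).trans (rpow_add_le_add_rpow _ _ hq0 hq1)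
    _ = ((m + 1 : ℕ) : ℝ≥0∞) * p ^ q + (a - (m + 1 : ℕ) * p) ^ q := by push_cast; ring

lemma Finset.sum_rpow_eq_of_center {α : Type*} [DecidableEq α] {s : Finset α} {c : α}
    (hc : c ∈ s) {m : ℕ} (hs : s.card = m + 1) {g : α → ℝ≥0∞} {x p : ℝ≥0∞}
    (hg : ∀ j ∈ s, g j = if j = c then (1 - m * p) * x else p * x) {q : ℝ} (hq : 0 ≤ q) :
    ∑ j ∈ s, g j ^ q = (m * p ^ q + (1 - m * p) ^ q) * x ^ q := by
  have hoff : ∀ j ∈ s.erase c, g j ^ q = (p * x) ^ q := fun j hj => by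
    rw [hg j (mem_of_mem_erase hj), if_neg (ne_of_mem_erase hj)]
  rw [← add_sum_erase s _ hc, sum_congr rfl hoff, sum_const, card_erase_of_mem hc, hs,
    hg c hc, if_pos rfl, mul_rpow_of_nonneg _ _ hq, mul_rpow_of_nonneg _ _ hq, nsmul_eq_mul]
  push_cast
  ring

lemma ENNReal.tsum_subtype_le_tsum_tsum {α ι : Type*} {f : α → ℝ≥0∞} {s : Set α}
    {I : Set ι} {t : ι → Set α} (h : ∀ j ∈ s, f j ≠ 0 → ∃ i ∈ I, j ∈ t i) :
    ∑' j : s, f j ≤ ∑' i : I, ∑' j : t i, f j := by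
  have hsupp : Function.support (s.indicator f) ⊆ ⋃ i ∈ I, t i := fun j hj => by
    rw [support_indicator] at hj
    simpa using h j hj.1 hj.2
  calc ∑' j : s, f j = ∑' j : ⋃ i ∈ I, t i, s.indicator f j := by
        rw [tsum_subtype, tsum_subtype_eq_of_support_subset hsupp]
    _ ≤ ∑' i : I, ∑' j : t i, s.indicator f j := tsum_biUnion_le_tsum _ _ _
    _ ≤ ∑' i : I, ∑' j : t i, f j :=
        ENNReal.tsum_le_tsum fun _ => ENNReal.tsum_le_tsum fun _ => indicator_le_self _ _ _

section Subcubes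

variable {X : Type*} (N : ℤ → Set ℕ) (Q : ℤ → ℕ → Set X)

def subcubes (k : ℤ) (i : ℕ) (m : ℤ) : Set ℕ := {j | j ∈ N m ∧ Q m j ⊆ Q k i}

variable {N Q}

lemma exists_mem_subcubes_of_nonempty (hcover : ∀ k : ℤ, ⋃ i ∈ N k, Q k i = Set.univ)
    (hnest : ∀ (k m : ℤ), m ≤ k → ∀ i ∈ N k, ∀ j ∈ N m, Q k i ∩ Q m j = ∅ ∨ Q k i ⊆ Q m j)
    {k m m' : ℤ} {i j : ℕ} (hkm : k ≤ m) (hmm' : m ≤ m') (hi : i ∈ N k)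
    (hj : j ∈ subcubes N Q k i m') (hne : (Q m' j).Nonempty) :
    ∃ i' ∈ subcubes N Q k i m, j ∈ subcubes N Q m i' m' := by
  obtain ⟨x, hx⟩ := hne
  obtain ⟨i', hi', hxi'⟩ := mem_iUnion₂.mp (hcover m ▸ mem_univ x)
  have hsub : Q m' j ⊆ Q m i' := (hnest m' m hmm' j hj.1 i' hi').resolve_left
    (nonempty_of_mem (mem_inter hx hxi')).ne_empty
  have hsub' : Q m i' ⊆ Q k i := (hnest m k hkm i' hi' i hi).resolve_left
    (nonempty_of_mem (mem_inter hxi' (hj.2 hx))).ne_empty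
  exact ⟨i', ⟨hi', hsub'⟩, hj.1, hsub⟩

lemma tsum_subcubes_succ_le_tsum_tsum (hcover : ∀ k : ℤ, ⋃ i ∈ N k, Q k i = Set.univ)
    (hnest : ∀ (k m : ℤ), m ≤ k → ∀ i ∈ N k, ∀ j ∈ N m, Q k i ∩ Q m j = ∅ ∨ Q k i ⊆ Q m j)
    {k m : ℤ} {i : ℕ} (hkm : k ≤ m) (hi : i ∈ N k) {g : ℕ → ℝ≥0∞}
    (hg : ∀ j, g j ≠ 0 → (Q (m + 1) j).Nonempty) :
    ∑' j : subcubes N Q k i (m + 1), g j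
      ≤ ∑' i' : subcubes N Q k i m, ∑' j : subcubes N Q m i' (m + 1), g j :=
  ENNReal.tsum_subtype_le_tsum_tsum fun j hj hgj =>
    exists_mem_subcubes_of_nonempty hcover hnest hkm (by omega) hi hj (hg j hgj)

variable [MeasurableSpace X] {μ : Measure X} {M : ℕ} {Mf : ℤ → ℕ → ℕ} {p : ℝ≥0∞}
  {ctr : ℤ → ℕ → ℕ}

lemma tsum_children_rpow_le (hM : ∀ (k : ℤ) (i : ℕ), Mf k i ≤ M)
    (hchild : ∀ (k : ℤ), ∀ i ∈ N k, (subcubes N Q k i (k + 1)).ncard = Mf k i + 1)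
    (hctr : ∀ (k : ℤ), ∀ i ∈ N k, ctr k i ∈ subcubes N Q k i (k + 1))
    (hrec : ∀ (k : ℤ), ∀ i ∈ N k, ∀ j ∈ subcubes N Q k i (k + 1),
      μ (Q (k + 1) j) = if j = ctr k i then (1 - (Mf k i : ℝ≥0∞) * p) * μ (Q k i)
        else p * μ (Q k i))
    {q : ℝ} (hq0 : 0 ≤ q) (hq1 : q ≤ 1) {k : ℤ} {i : ℕ} (hi : i ∈ N k) :
    ∑' j : subcubes N Q k i (k + 1), μ (Q (k + 1) j) ^ q
      ≤ μ (Q k i) ^ q * (M * p ^ q + (1 - M * p) ^ q) := by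
  have hfin : (subcubes N Q k i (k + 1)).Finite :=
    finite_of_ncard_ne_zero (by simp [hchild k i hi])
  obtain ⟨s, hs⟩ := hfin.exists_finset_coe
  have hcard : s.card = Mf k i + 1 := by rw [← ncard_coe_finset, hs, hchild k i hi]
  have hc : ctr k i ∈ s := by rw [← Finset.mem_coe, hs]; exact hctr k i hi
  rw [← hs, Finset.tsum_subtype' s fun j => μ (Q (k + 1) j) ^ q,
    Finset.sum_rpow_eq_of_center hc hcard (fun j hj => hrec k i hi j (hs ▸ hj)) hq0,
    mul_comm (μ (Q k i) ^ q)]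
  exact mul_le_mul_left
    (ENNReal.monotone_natCast_mul_rpow_add_tsub_mul_rpow 1 p hq0 hq1 (hM k i)) _

end Subcubes

theorem sum_subcube_masses_rpow_le_general {X : Type*} [MeasurableSpace X]
    (N : ℤ → Set ℕ) (Q : ℤ → ℕ → Set X)
    (hcover : ∀ k : ℤ, ⋃ i ∈ N k, Q k i = Set.univ)
    (hnest : ∀ (k m : ℤ), m ≤ k → ∀ i ∈ N k, ∀ j ∈ N m,
      Q k i ∩ Q m j = ∅ ∨ Q k i ⊆ Q m j)
    (M : ℕ) (Mf : ℤ → ℕ → ℕ) (hM : ∀ (k : ℤ) (i : ℕ), Mf k i ≤ M)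
    (hchild : ∀ (k : ℤ), ∀ i ∈ N k,
      Set.ncard {j | j ∈ N (k + 1) ∧ Q (k + 1) j ⊆ Q k i} = Mf k i + 1)
    (p : ℝ≥0∞)
    (ctr : ℤ → ℕ → ℕ)
    (hctr : ∀ (k : ℤ), ∀ i ∈ N k, ctr k i ∈ N (k + 1) ∧ Q (k + 1) (ctr k i) ⊆ Q k i)
    (μ : Measure X)
    (hrec : ∀ (k : ℤ), ∀ i ∈ N k, ∀ j ∈ N (k + 1), Q (k + 1) j ⊆ Q k i →
      μ (Q (k + 1) j) = if j = ctr k i then (1 - (Mf k i : ℝ≥0∞) * p) * μ (Q k i)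
        else p * μ (Q k i)) :
    ∀ (q : ℝ), 0 < q → q < 1 → ∀ (k : ℤ), ∀ i ∈ N k, ∀ n : ℕ, 1 ≤ n →
      (∑' j : {j : ℕ // j ∈ N (k + n) ∧ Q (k + n) j ⊆ Q k i},
          μ (Q (k + n) (j : ℕ)) ^ q)
        ≤ μ (Q k i) ^ q * ((M : ℝ≥0∞) * p ^ q + (1 - (M : ℝ≥0∞) * p) ^ q) ^ n := by
  intro q hq0 hq1 k i hi n hn
  set C : ℝ≥0∞ := M * p ^ q + (1 - M * p) ^ q
  have hchildren : ∀ {m : ℤ} {i' : ℕ}, i' ∈ N m →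
      ∑' j : subcubes N Q m i' (m + 1), μ (Q (m + 1) j) ^ q ≤ μ (Q m i') ^ q * C :=
    tsum_children_rpow_le hM hchild hctr (fun k i hi j hj => hrec k i hi j hj.1 hj.2)
      hq0.le hq1.le
  change ∑' j : subcubes N Q k i (k + n), μ (Q (k + n) j) ^ q ≤ _
  induction n, hn using Nat.le_induction with
  | base => simpa using hchildren hi
  | succ n hn ih =>
    have hempty : ∀ j, μ (Q (k + n + 1) j) ^ q ≠ 0 → (Q (k + n + 1) j).Nonempty := fun j hj =>
      nonempty_iff_ne_empty.mpr fun h => hj (by simp [h, hq0])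
    rw [Nat.cast_add_one, ← add_assoc]
    calc ∑' j : subcubes N Q k i (k + n + 1), μ (Q (k + n + 1) j) ^ q
        ≤ ∑' i' : subcubes N Q k i (k + n),
            ∑' j : subcubes N Q (k + n) i' (k + n + 1), μ (Q (k + n + 1) j) ^ q :=
          tsum_subcubes_succ_le_tsum_tsum hcover hnest (by omega) hi hempty
      _ ≤ ∑' i' : subcubes N Q k i (k + n), μ (Q (k + n) i') ^ q * C :=
          ENNReal.tsum_le_tsum fun i' => hchildren i'.2.1
      _ = (∑' i' : subcubes N Q k i (k + n), μ (Q (k + n) i') ^ q) * C := ENNReal.tsum_mul_right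
      _ ≤ μ (Q k i) ^ q * C ^ n * C := by gcongr
      _ = μ (Q k i) ^ q * C ^ (n + 1) := by ring

/-- For a measure whose generalised-dyadic-cube masses follow the recursion (each cube
`Q k i` has `Mf k i + 1 ≤ M + 1` children, off-centre children get mass `p·μ(Q k i)`,
the centre child gets `(1 - Mf k i · p)·μ(Q k i)`, `0 < p ≤ 1/(M+1)`): for every
`0 < q < 1`, every cube and every `n ≥ 1`, the sum of `μ(Q)^q` over the level-`(k+n)`
subcubes `Q` of `Q k i` is at most `μ(Q k i)^q · (M p^q + (1 - M p)^q)^n`. -/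
theorem sum_subcube_masses_rpow_le {X : Type*} [MetricSpace X] [MeasurableSpace X]
    [BorelSpace X]
    (N : ℤ → Set ℕ) (Q : ℤ → ℕ → Set X)
    (hcover : ∀ k : ℤ, ⋃ i ∈ N k, Q k i = Set.univ)
    (hnest : ∀ (k m : ℤ), m ≤ k → ∀ i ∈ N k, ∀ j ∈ N m,
      Q k i ∩ Q m j = ∅ ∨ Q k i ⊆ Q m j)
    (hdisj : ∀ (k : ℤ), ∀ i ∈ N k, ∀ j ∈ N k, i ≠ j → Q k i ∩ Q k j = ∅)
    (M : ℕ) (Mf : ℤ → ℕ → ℕ) (hM : ∀ (k : ℤ) (i : ℕ), Mf k i ≤ M)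
    (hchild : ∀ (k : ℤ), ∀ i ∈ N k,
      Set.ncard {j | j ∈ N (k + 1) ∧ Q (k + 1) j ⊆ Q k i} = Mf k i + 1)
    (p : ℝ≥0∞) (hp0 : 0 < p) (hp1 : p ≤ 1 / ((M : ℝ≥0∞) + 1))
    (ctr : ℤ → ℕ → ℕ)
    (hctr : ∀ (k : ℤ), ∀ i ∈ N k, ctr k i ∈ N (k + 1) ∧ Q (k + 1) (ctr k i) ⊆ Q k i)
    (μ : Measure X)
    (hrec : ∀ (k : ℤ), ∀ i ∈ N k, ∀ j ∈ N (k + 1), Q (k + 1) j ⊆ Q k i →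
      μ (Q (k + 1) j) = if j = ctr k i then (1 - (Mf k i : ℝ≥0∞) * p) * μ (Q k i)
        else p * μ (Q k i)) :
    ∀ (q : ℝ), 0 < q → q < 1 → ∀ (k : ℤ), ∀ i ∈ N k, ∀ n : ℕ, 1 ≤ n →
      (∑' j : {j : ℕ // j ∈ N (k + n) ∧ Q (k + n) j ⊆ Q k i},
          μ (Q (k + n) (j : ℕ)) ^ q)
        ≤ μ (Q k i) ^ q * ((M : ℝ≥0∞) * p ^ q + (1 - (M : ℝ≥0∞) * p) ^ q) ^ n :=
  sum_subcube_masses_rpow_le_general N Q hcover hnest M Mf hM hchild p ctr hctr μ hrec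
end
end
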